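/- arXiv:2010.14843 — 5 statements merged into one kernel-verified Lean document; each statement's English description precedes it below -/
import Mathlib

section
/- Let Γ be a totally ordered ℚ-vector space and g : Γ → ℚ a step function with g(t) > 0 for all t ∈ Γ. Then for a fixed a ∈ Γ, the function h : Γ → Γ defined by h(t) = ∫_a^t g(s) ds is a bijective piecewise linear function, and the inverse of any bijective piecewise linear function Γ → Γ is again piecewise linear. -/
/-!
Where the step function `g` has the constant value `c > 0`, the integral `h` is affine with
slope `c`; so `h` is piecewise affine with positive slopes, hence strictly monotone, and it maps
`(-∞, a₀]`, each `[aᵢ₋₁, aᵢ]` and `[aₙ, ∞)` onto `(-∞, h a₀]`, `[h aᵢ₋₁, h aᵢ]` and `[h aₙ, ∞)`,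
which cover `Γ`.

For an injective piecewise linear `f`, the first slope is nonzero, and up to replacing `f` by `-f`
it is positive. An injective function cannot pass from a positive slope to a nonpositive one at a
breakpoint, so all slopes of nondegenerate pieces are then positive. The inverse is then affine
with slope `b⁻¹` on the image `[f aᵢ₋₁, f aᵢ]` of a piece of slope `b`.
-/

variable {Γ : Type*} [AddCommGroup Γ] [LinearOrder Γ] [IsOrderedAddMonoid Γ] [Module ℚ Γ]

/-- A step function `g : Γ → ℚ`: there are finitely many points
`a 0 ≤ a 1 ≤ ... ≤ a n` such that `g` is constant on each open interval between
consecutive points and on the two unbounded open intervals. -/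
def IsStepFunction (g : Γ → ℚ) : Prop :=
  ∃ (n : ℕ) (a : Fin (n + 1) → Γ), Monotone a ∧
    (∃ c : ℚ, ∀ t, t < a 0 → g t = c) ∧
    (∀ i : Fin n, ∃ c : ℚ, ∀ t, a i.castSucc < t → t < a i.succ → g t = c) ∧
    (∃ c : ℚ, ∀ t, a (Fin.last n) < t → g t = c)

/-- A piecewise linear function `h : Γ → Γ`: there are finitely many points
`a 0 ≤ a 1 ≤ ... ≤ a n` such that on each closed interval between consecutive points
(and on the two unbounded intervals) `h` has the form `t ↦ b • t + c` with `b ∈ ℚ`,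
`c ∈ Γ`. -/
def IsPiecewiseLinear (h : Γ → Γ) : Prop :=
  ∃ (n : ℕ) (a : Fin (n + 1) → Γ), Monotone a ∧
    (∃ (b : ℚ) (c : Γ), ∀ t, t ≤ a 0 → h t = b • t + c) ∧
    (∀ i : Fin n, ∃ (b : ℚ) (c : Γ),
      ∀ t, a i.castSucc ≤ t → t ≤ a i.succ → h t = b • t + c) ∧
    (∃ (b : ℚ) (c : Γ), ∀ t, a (Fin.last n) ≤ t → h t = b • t + c)

/-- `h` is the indefinite integral `h t = ∫_a^t g(s) ds` of the step function `g` based at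
`a`: it vanishes at `a` and on any interval on which `g` is constant with value `c` the
increment of `h` is `c` times the length of the interval. -/
def IsIntegralOf (g : Γ → ℚ) (a : Γ) (h : Γ → Γ) : Prop :=
  h a = 0 ∧
    ∀ s t : Γ, s < t → ∀ c : ℚ, (∀ u, s < u → u < t → g u = c) → h t - h s = c • (t - s)

set_option linter.unusedSectionVars false

open Set Function

instance posSMulStrictMono_rat : PosSMulStrictMono ℚ Γ where
  smul_lt_smul_of_pos_left q hq x y hxy := by
    rw [← sub_pos, ← smul_sub, ← nsmul_pos_iff q.den_ne_zero, ← Nat.cast_smul_eq_nsmul ℚ,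
      smul_smul, Rat.den_mul_eq_num, ← Int.toNat_of_nonneg (Rat.num_nonneg.2 hq.le),
      Int.cast_natCast, Nat.cast_smul_eq_nsmul, nsmul_pos_iff]
    · exact sub_pos.2 hxy
    · have := Rat.num_pos.2 hq; omega

instance denselyOrdered_of_module_rat : DenselyOrdered Γ where
  dense x y hxy := by
    have hz : 0 < y - x := sub_pos.2 hxy
    refine ⟨x + (1 / 2 : ℚ) • (y - x), lt_add_of_pos_right _ (smul_pos (by norm_num) hz), ?_⟩
    calc x + (1 / 2 : ℚ) • (y - x) < x + (y - x) :=
          add_lt_add_right (smul_lt_of_lt_one_left hz (by norm_num)) x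
      _ = y := add_sub_cancel x y

section Affine

variable {V : Type*} [AddCommGroup V] [Module ℚ V]

def AffineOn (f : V → V) (b : ℚ) (s : Set V) : Prop :=
  ∃ c : V, ∀ t ∈ s, f t = b • t + c

namespace AffineOn

variable {f : V → V} {b : ℚ} {s t : Set V}

theorem mono (hf : AffineOn f b t) (hst : s ⊆ t) : AffineOn f b s :=
  let ⟨c, hc⟩ := hf
  ⟨c, fun x hx => hc x (hst hx)⟩

theorem of_subsingleton (hs : s.Subsingleton) : AffineOn f b s := by
  rcases s.eq_empty_or_nonempty with rfl | ⟨x, hx⟩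
  · exact ⟨0, fun _ h => h.elim⟩
  · exact ⟨f x - b • x, fun t ht => by rw [hs ht hx, add_sub_cancel]⟩

theorem neg (hf : AffineOn f b s) : AffineOn (-f) (-b) s :=
  let ⟨c, hc⟩ := hf
  ⟨-c, fun t ht => by rw [Pi.neg_apply, hc t ht, neg_add, neg_smul]⟩

theorem comp_neg (hf : AffineOn f b s) : AffineOn (fun t => f (-t)) (-b) (-s) :=
  let ⟨c, hc⟩ := hf
  ⟨c, fun t ht => show f (-t) = _ by rw [hc (-t) ht, smul_neg, neg_smul]⟩

theorem invFun (hf : AffineOn f b s) (hinj : Injective f) (hb : b ≠ 0) :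
    AffineOn (Function.invFun f) b⁻¹ (f '' s) := by
  obtain ⟨c, hc⟩ := hf
  refine ⟨-(b⁻¹ • c), ?_⟩
  rintro _ ⟨x, hx, rfl⟩
  rw [leftInverse_invFun hinj x, hc x hx, smul_add, inv_smul_smul₀ hb, add_neg_cancel_right]

end AffineOn

end Affine

def affineOrderIso {b : ℚ} (hb : 0 < b) (c : Γ) : Γ ≃o Γ :=
  (OrderIso.smulRight hb).trans (OrderIso.addRight c)

theorem eqOn_affineOrderIso {f : Γ → Γ} {b : ℚ} {s : Set Γ} (hb : 0 < b) {c : Γ}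
    (hc : ∀ t ∈ s, f t = b • t + c) : EqOn f (affineOrderIso hb c) s :=
  hc

namespace AffineOn

variable {f : Γ → Γ} {b b' : ℚ} {s : Set Γ} {p q r : Γ}

theorem strictMonoOn (hf : AffineOn f b s) (hb : 0 < b) : StrictMonoOn f s :=
  let ⟨c, hc⟩ := hf
  (affineOrderIso hb c).strictMono.strictMonoOn s |>.congr (eqOn_affineOrderIso hb hc).symm

theorem image_Iic (hf : AffineOn f b (Iic q)) (hb : 0 < b) : f '' Iic q = Iic (f q) := by
  obtain ⟨c, hc⟩ := hf
  have e := eqOn_affineOrderIso hb hc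
  rw [e.image_eq, OrderIso.image_Iic, e self_mem_Iic]

theorem image_Ici (hf : AffineOn f b (Ici p)) (hb : 0 < b) : f '' Ici p = Ici (f p) := by
  obtain ⟨c, hc⟩ := hf
  have e := eqOn_affineOrderIso hb hc
  rw [e.image_eq, OrderIso.image_Ici, e self_mem_Ici]

theorem image_Icc (hf : AffineOn f b (Icc p q)) (hb : 0 < b) (hpq : p ≤ q) :
    f '' Icc p q = Icc (f p) (f q) := by
  obtain ⟨c, hc⟩ := hf
  have e := eqOn_affineOrderIso hb hc
  rw [e.image_eq, OrderIso.image_Icc, e (left_mem_Icc.2 hpq), e (right_mem_Icc.2 hpq)]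

/-- If `b > 0 ≥ b'`, then for small `ε > 0` the points `q + b' • ε ≤ q < q + b • ε` have the
same image. -/
theorem slope_pos_of_injective (hinj : Injective f) (hpq : p < q) (hqr : q < r)
    (hl : AffineOn f b (Icc p q)) (hb : 0 < b) (hr : AffineOn f b' (Icc q r)) : 0 < b' := by
  by_contra! hb'
  obtain ⟨c, hc⟩ := hl
  obtain ⟨c', hc'⟩ := hr
  set m := min (q - p) (r - q)
  set ε := (b - b')⁻¹ • m
  have hm : 0 < m := lt_min (sub_pos.2 hpq) (sub_pos.2 hqr)
  have hε : 0 < ε := smul_pos (inv_pos.2 (by linarith)) hm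
  have hbε : 0 < b • ε := smul_pos hb hε
  have hb'ε : b' • ε ≤ 0 := smul_nonpos_of_nonpos_of_nonneg hb' hε.le
  have hsum : b • ε - b' • ε = m := by
    rw [← sub_smul, smul_inv_smul₀ (by linarith)]
  have hu : q + b' • ε ∈ Icc p q := by
    refine ⟨neg_le_sub_iff_le_add.1 ?_, (add_le_iff_nonpos_right _).2 hb'ε⟩
    calc -(b' • ε) ≤ m := by rw [← hsum, sub_eq_neg_add]; exact le_add_of_nonneg_right hbε.le
      _ ≤ q - p := min_le_left _ _
  have hv : q + b • ε ∈ Icc q r := by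
    refine ⟨le_add_of_nonneg_right hbε.le, le_sub_iff_add_le'.1 ?_⟩
    calc b • ε ≤ m := by rw [← hsum]; exact (le_sub_self_iff _).2 hb'ε
      _ ≤ r - q := min_le_right _ _
  have hq : b • q + c = b' • q + c' :=
    (hc q (right_mem_Icc.2 hpq.le)).symm.trans (hc' q (left_mem_Icc.2 hqr.le))
  have hcollide : f (q + b' • ε) = f (q + b • ε) := by
    rw [hc _ hu, hc' _ hv]
    linear_combination (norm := module) hq
  exact (hb'ε.trans_lt hbε).ne (add_left_cancel (hinj hcollide))

end AffineOn

theorem isPiecewiseLinear_iff {f : Γ → Γ} :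
    IsPiecewiseLinear f ↔ ∃ (n : ℕ) (a : Fin (n + 1) → Γ), Monotone a ∧
      (∃ b, AffineOn f b (Iic (a 0))) ∧
      (∀ i : Fin n, ∃ b, AffineOn f b (Icc (a i.castSucc) (a i.succ))) ∧
      ∃ b, AffineOn f b (Ici (a (Fin.last n))) := by
  simp only [IsPiecewiseLinear, AffineOn, mem_Iic, mem_Icc, mem_Ici, and_imp]

theorem IsPiecewiseLinear.comp_neg {f : Γ → Γ} (hf : IsPiecewiseLinear f) :
    IsPiecewiseLinear (fun t => f (-t)) := by
  obtain ⟨n, a, ha, ⟨b₀, h₀⟩, hmid, ⟨b₁, h₁⟩⟩ := isPiecewiseLinear_iff.1 hf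
  refine isPiecewiseLinear_iff.2 ⟨n, fun i => -a i.rev,
    fun i j hij => neg_le_neg (ha (Fin.rev_le_rev.2 hij)), ⟨-b₁, ?_⟩, fun i => ?_, ⟨-b₀, ?_⟩⟩
  · simpa [neg_Ici] using h₁.comp_neg
  · obtain ⟨b, hb⟩ := hmid i.rev
    exact ⟨-b, by simpa [neg_Icc, Fin.rev_castSucc, Fin.rev_succ] using hb.comp_neg⟩
  · simpa [neg_Iic] using h₀.comp_neg

def IsPosPiecewiseAffine (f : Γ → Γ) {n : ℕ} (a : Fin (n + 1) → Γ) : Prop :=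
  Monotone a ∧ (∃ b, 0 < b ∧ AffineOn f b (Iic (a 0))) ∧
    (∀ i : Fin n, ∃ b, 0 < b ∧ AffineOn f b (Icc (a i.castSucc) (a i.succ))) ∧
    ∃ b, 0 < b ∧ AffineOn f b (Ici (a (Fin.last n)))

theorem isPosPiecewiseAffine_of_subsingleton [Subsingleton Γ] (f : Γ → Γ) :
    IsPosPiecewiseAffine f (fun _ : Fin 1 => (0 : Γ)) :=
  ⟨monotone_const, ⟨1, one_pos, .of_subsingleton subsingleton_of_subsingleton⟩, Fin.elim0,
    ⟨1, one_pos, .of_subsingleton subsingleton_of_subsingleton⟩⟩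

namespace IsPosPiecewiseAffine

variable {f : Γ → Γ} {n : ℕ} {a : Fin (n + 1) → Γ}

theorem isPiecewiseLinear (hf : IsPosPiecewiseAffine f a) : IsPiecewiseLinear f := by
  obtain ⟨ha, ⟨b₀, -, h₀⟩, hmid, ⟨b₁, -, h₁⟩⟩ := hf
  refine isPiecewiseLinear_iff.2 ⟨n, a, ha, ⟨b₀, h₀⟩, fun i => ?_, ⟨b₁, h₁⟩⟩
  obtain ⟨b, -, hb⟩ := hmid i
  exact ⟨b, hb⟩

theorem strictMono (hf : IsPosPiecewiseAffine f a) : StrictMono f := by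
  obtain ⟨ha, ⟨b₀, hb₀, h₀⟩, hmid, ⟨b₁, hb₁, h₁⟩⟩ := hf
  have hIic : ∀ i, StrictMonoOn f (Iic (a i)) := by
    intro i
    induction i using Fin.induction with
    | zero => exact h₀.strictMonoOn hb₀
    | succ i ih =>
      obtain ⟨b, hb, hi⟩ := hmid i
      have hle := ha (Fin.castSucc_le_succ i)
      rw [← Iic_union_Icc_eq_Iic hle]
      exact ih.union (hi.strictMonoOn hb) isGreatest_Iic (isLeast_Icc hle)
  exact (hIic (Fin.last n)).Iic_union_Ici (h₁.strictMonoOn hb₁)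

theorem surjective (hf : IsPosPiecewiseAffine f a) : Surjective f := by
  have hmono := hf.strictMono.monotone
  obtain ⟨ha, ⟨b₀, hb₀, h₀⟩, hmid, ⟨b₁, hb₁, h₁⟩⟩ := hf
  have hIic : ∀ i, Iic (f (a i)) ⊆ range f := by
    intro i
    induction i using Fin.induction with
    | zero => exact h₀.image_Iic hb₀ ▸ image_subset_range _ _
    | succ i ih =>
      obtain ⟨b, hb, hi⟩ := hmid i
      have hle := ha (Fin.castSucc_le_succ i)
      rw [← Iic_union_Icc_eq_Iic (hmono hle), ← hi.image_Icc hb hle]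
      exact union_subset ih (image_subset_range _ _)
  have hIci : Ici (f (a (Fin.last n))) ⊆ range f := h₁.image_Ici hb₁ ▸ image_subset_range _ _
  intro y
  rcases le_total y (f (a (Fin.last n))) with hy | hy
  · exact hIic _ hy
  · exact hIci hy

theorem invFun (hf : IsPosPiecewiseAffine f a) :
    IsPosPiecewiseAffine (Function.invFun f) (f ∘ a) := by
  have hmono := hf.strictMono
  obtain ⟨ha, ⟨b₀, hb₀, h₀⟩, hmid, ⟨b₁, hb₁, h₁⟩⟩ := hf
  refine ⟨hmono.monotone.comp ha, ⟨b₀⁻¹, inv_pos.2 hb₀, ?_⟩, fun i => ?_,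
    ⟨b₁⁻¹, inv_pos.2 hb₁, ?_⟩⟩
  · rw [comp_apply, ← h₀.image_Iic hb₀]
    exact h₀.invFun hmono.injective hb₀.ne'
  · obtain ⟨b, hb, hi⟩ := hmid i
    refine ⟨b⁻¹, inv_pos.2 hb, ?_⟩
    rw [comp_apply, comp_apply, ← hi.image_Icc hb (ha (Fin.castSucc_le_succ i))]
    exact hi.invFun hmono.injective hb.ne'
  · rw [comp_apply, ← h₁.image_Ici hb₁]
    exact h₁.invFun hmono.injective hb₁.ne'

end IsPosPiecewiseAffine

theorem isPosPiecewiseAffine_of_injective [Nontrivial Γ] {f : Γ → Γ} {n : ℕ}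
    {a : Fin (n + 1) → Γ} {b₀ : ℚ} (hinj : Injective f) (ha : Monotone a)
    (h₀ : AffineOn f b₀ (Iic (a 0))) (hb₀ : 0 < b₀)
    (hmid : ∀ i : Fin n, ∃ b, AffineOn f b (Icc (a i.castSucc) (a i.succ)))
    (h₁ : ∃ b, AffineOn f b (Ici (a (Fin.last n)))) : IsPosPiecewiseAffine f a := by
  have hleft : ∀ i, ∃ p < a i, ∃ b, 0 < b ∧ AffineOn f b (Icc p (a i)) := by
    intro i
    induction i using Fin.induction with
    | zero =>
      obtain ⟨p, hp⟩ := exists_lt (a 0)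
      exact ⟨p, hp, b₀, hb₀, h₀.mono Icc_subset_Iic_self⟩
    | succ i ih =>
      obtain ⟨b, hb⟩ := hmid i
      rcases (ha (Fin.castSucc_le_succ i)).lt_or_eq with hlt | heq
      · obtain ⟨p, hp, b', hb', hl⟩ := ih
        exact ⟨_, hlt, b, hl.slope_pos_of_injective hinj hp hlt hb' hb, hb⟩
      · exact heq ▸ ih
  refine ⟨ha, ⟨b₀, hb₀, h₀⟩, fun i => ?_, ?_⟩
  · obtain ⟨b, hb⟩ := hmid i
    rcases (ha (Fin.castSucc_le_succ i)).lt_or_eq with hlt | heq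
    · obtain ⟨p, hp, b', hb', hl⟩ := hleft i.castSucc
      exact ⟨b, hl.slope_pos_of_injective hinj hp hlt hb' hb, hb⟩
    · exact ⟨1, one_pos, .of_subsingleton (subsingleton_Icc_of_ge heq.ge)⟩
  · obtain ⟨b, hb⟩ := h₁
    obtain ⟨p, hp, b', hb', hl⟩ := hleft (Fin.last n)
    obtain ⟨r, hr⟩ := exists_gt (a (Fin.last n))
    exact ⟨b, hl.slope_pos_of_injective hinj hp hr hb' (hb.mono Icc_subset_Ici_self), hb⟩

namespace IsPiecewiseLinear

variable {f : Γ → Γ}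

theorem exists_isPosPiecewiseAffine (hf : IsPiecewiseLinear f) (hinj : Injective f) :
    ∃ (n : ℕ) (a : Fin (n + 1) → Γ), IsPosPiecewiseAffine f a ∨ IsPosPiecewiseAffine (-f) a := by
  rcases subsingleton_or_nontrivial Γ with _ | _
  · exact ⟨0, _, .inl (isPosPiecewiseAffine_of_subsingleton f)⟩
  obtain ⟨n, a, ha, ⟨b₀, h₀⟩, hmid, h₁⟩ := isPiecewiseLinear_iff.1 hf
  refine ⟨n, a, ?_⟩
  have hb₀ : b₀ ≠ 0 := by
    rintro rfl
    obtain ⟨c, hc⟩ := h₀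
    obtain ⟨p, hp⟩ := exists_lt (a 0)
    exact hp.ne (hinj (by rw [hc p hp.le, hc (a 0) le_rfl, zero_smul, zero_smul]))
  rcases hb₀.lt_or_gt with hneg | hpos
  · refine .inr (isPosPiecewiseAffine_of_injective (neg_injective.comp hinj) ha h₀.neg
      (neg_pos.2 hneg) (fun i => ?_) ?_)
    · obtain ⟨b, hb⟩ := hmid i
      exact ⟨-b, hb.neg⟩
    · obtain ⟨b, hb⟩ := h₁
      exact ⟨-b, hb.neg⟩
  · exact .inl (isPosPiecewiseAffine_of_injective hinj ha h₀ hpos hmid h₁)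

theorem invFun (hf : IsPiecewiseLinear f) (hinj : Injective f) :
    IsPiecewiseLinear (Function.invFun f) := by
  obtain ⟨n, a, hpos | hneg⟩ := hf.exists_isPosPiecewiseAffine hinj
  · exact hpos.invFun.isPiecewiseLinear
  · have hinv : Function.invFun f = fun y => Function.invFun (-f) (-y) := by
      funext y
      obtain ⟨x, hx⟩ := hneg.surjective (-y)
      have hinj' : Injective (-f) := neg_injective.comp hinj
      rw [← hx, leftInverse_invFun hinj', ← neg_inj.1 hx, leftInverse_invFun hinj]
    rw [hinv]
    exact hneg.invFun.isPiecewiseLinear.comp_neg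

end IsPiecewiseLinear

namespace IsIntegralOf

variable {g : Γ → ℚ} {x₀ : Γ} {h : Γ → Γ} {c : ℚ} {p q : Γ}

theorem sub_eq_smul (hint : IsIntegralOf g x₀ h) {s t : Γ} (hst : s ≤ t)
    (hc : ∀ u, s < u → u < t → g u = c) : h t - h s = c • (t - s) := by
  rcases hst.lt_or_eq with hlt | rfl
  · exact hint.2 s t hlt c hc
  · rw [sub_self, sub_self, smul_zero]

theorem affineOn_Iic (hint : IsIntegralOf g x₀ h) (hc : ∀ u, u < q → g u = c) :
    AffineOn h c (Iic q) :=
  ⟨h q - c • q, fun t ht => by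
    linear_combination (norm := module) -hint.sub_eq_smul ht fun u _ hu => hc u hu⟩

theorem affineOn_Ici (hint : IsIntegralOf g x₀ h) (hc : ∀ u, p < u → g u = c) :
    AffineOn h c (Ici p) :=
  ⟨h p - c • p, fun t ht => by
    linear_combination (norm := module) hint.sub_eq_smul ht fun u hu _ => hc u hu⟩

theorem affineOn_Icc (hint : IsIntegralOf g x₀ h) (hc : ∀ u, p < u → u < q → g u = c) :
    AffineOn h c (Icc p q) :=
  ⟨h p - c • p, fun t ht => by
    linear_combination (norm := module)
      hint.sub_eq_smul ht.1 fun u hu hu' => hc u hu (hu'.trans_le ht.2)⟩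

theorem exists_isPosPiecewiseAffine (hint : IsIntegralOf g x₀ h) (hg : IsStepFunction g)
    (hgpos : ∀ t, 0 < g t) : ∃ (n : ℕ) (p : Fin (n + 1) → Γ), IsPosPiecewiseAffine h p := by
  rcases subsingleton_or_nontrivial Γ with _ | _
  · exact ⟨0, _, isPosPiecewiseAffine_of_subsingleton h⟩
  obtain ⟨n, p, hp, ⟨c₀, hc₀⟩, hmid, ⟨c₁, hc₁⟩⟩ := hg
  refine ⟨n, p, hp, ⟨c₀, ?_, hint.affineOn_Iic hc₀⟩, fun i => ?_,
    ⟨c₁, ?_, hint.affineOn_Ici hc₁⟩⟩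
  · obtain ⟨u, hu⟩ := exists_lt (p 0)
    exact hc₀ u hu ▸ hgpos u
  · obtain ⟨c, hc⟩ := hmid i
    rcases (hp (Fin.castSucc_le_succ i)).lt_or_eq with hlt | heq
    · obtain ⟨u, hu, hu'⟩ := exists_between hlt
      exact ⟨c, hc u hu hu' ▸ hgpos u, hint.affineOn_Icc hc⟩
    · exact ⟨1, one_pos, .of_subsingleton (subsingleton_Icc_of_ge heq.ge)⟩
  · obtain ⟨u, hu⟩ := exists_gt (p (Fin.last n))
    exact hc₁ u hu ▸ hgpos u

end IsIntegralOf

/-- Let `Γ` be a totally ordered `ℚ`-vector space and `g : Γ → ℚ` a step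
function with `g(t) > 0` for all `t`.  Then for a fixed `a ∈ Γ`, the function
`h(t) = ∫_a^t g(s) ds` is a bijective piecewise linear function; moreover the inverse of
any bijective piecewise linear function `Γ → Γ` is again piecewise linear. -/
theorem integral_of_positive_step_function_bijective_piecewise_linear
    (g : Γ → ℚ) (hg : IsStepFunction g) (hgpos : ∀ t, 0 < g t) (a : Γ) (h : Γ → Γ)
    (hint : IsIntegralOf g a h) :
    (Function.Bijective h ∧ IsPiecewiseLinear h) ∧
    ∀ f : Γ → Γ, Function.Bijective f → IsPiecewiseLinear f →
      IsPiecewiseLinear (Function.invFun f) := by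
  obtain ⟨n, p, hp⟩ := hint.exists_isPosPiecewiseAffine hg hgpos
  exact ⟨⟨⟨hp.strictMono.injective, hp.surjective⟩, hp.isPiecewiseLinear⟩,
    fun f hf hpl => hpl.invFun hf.injective⟩
end

section
/- Let V ⊆ W be a monogenic integral extension of henselian ℤ²-valuation rings with L/K Galois of group G, residue field κ(m) of V perfect with κ(m) = κ(m'), [L:K] = [κ(p'):κ(p)], and define the lower ramification filtration G_t = {σ ∈ G : j_G(σ) ≥ t} with j_G(σ) = i_G(σ) − ε_K/|G| and i_G(σ) = min{v(σx − x) : x ∈ W}. For every t ≥ 0 in Γ_W, the map θ_t sending σ ∈ G_t to the class of σ(e)/e in U_t/U_{t+ε_L}, for any e ∈ W with v(e) = ε_L, is a well-defined group homomorphism with kernel G_{t+ε_L}; consequently G_t/G_{t+ε_L} embeds into U_t/U_{t+ε_L}. -/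
open scoped Polynomial

/-!
Well-definedness and multiplicativity of `θ_t` come from the identities
`σe/e − σe'/e' = −(σu − u)·σe/e'` with `u = e'/e`, and `(στ)e/e − (σe/e)(τe/e) = (σu − u)·σe/e`
with `u = τe/e`: in both `u` is a unit, so the value is at least `i_G(σ)`.

For the kernel one needs `v(σe − e) ≤ i_G(σ)`. Since the residue extension is trivial, any
`x ∈ W` is `y + ze` with `y ∈ K` and `z ∈ W` (as `v(e) = ε_L` is the least positive value), so
`σx − x = σz·(σe − e) + (σz − z)·e` has value at least `min (v(σe − e)) (ε_L + i_G(σ))`.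
At an `x` realising `i_G(σ)` this minimum cannot be `ε_L + i_G(σ)`.
-/

theorem WithTop.coe_toLex_zero_one_le_of_pos {a : WithTop (ℤ ×ₗ ℤ)} (ha : 0 < a) :
    ((toLex (0, 1) : ℤ ×ₗ ℤ) : WithTop (ℤ ×ₗ ℤ)) ≤ a := by
  induction a using WithTop.recTopCoe with
  | top => exact le_top
  | coe γ =>
    rw [WithTop.coe_pos, show (0 : ℤ ×ₗ ℤ) = toLex (0, 0) from rfl, ← toLex_ofLex γ,
      Prod.Lex.lt_iff] at ha
    rw [WithTop.coe_le_coe, ← toLex_ofLex γ, Prod.Lex.le_iff]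
    simp only [ofLex_toLex] at ha ⊢
    omega

namespace AddValuation

variable {K L Γ : Type*} [Field K] [Field L] [Algebra K L]
  [AddCommGroup Γ] [LinearOrder Γ] [IsOrderedAddMonoid Γ] (w : AddValuation L (WithTop Γ))

theorem map_div_sub_one_add {x e : L} (he : e ≠ 0) : w (x / e - 1) + w e = w (x - e) := by
  rw [← w.map_mul, sub_mul, div_mul_cancel₀ _ he, one_mul]

theorem le_map_div_sub_one_iff {x e : L} (he : e ≠ 0) {s : WithTop Γ} :
    s ≤ w (x / e - 1) ↔ s + w e ≤ w (x - e) := by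
  rw [← w.map_div_sub_one_add he, WithTop.add_le_add_iff_right (w.ne_top_iff.mpr he)]

theorem map_div_eq_zero {x y : L} (hy : y ≠ 0) (h : w x = w y) : w (x / y) = 0 := by
  rw [map_div, h,
    LinearOrderedAddCommGroupWithTop.sub_self_eq_zero_of_ne_top (w.ne_top_iff.mpr hy)]

variable {w}

section Galois

variable (σ : L ≃ₐ[K] L) (hinv : ∀ x, w (σ x) = w x)
include hinv

theorem map_apply_div_self {e : L} (he : e ≠ 0) : w (σ e / e) = 0 :=
  w.map_div_eq_zero he (hinv e)

theorem le_map_apply_div_sub_apply_div {i : WithTop Γ}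
    (hi : ∀ x, 0 ≤ w x → i ≤ w (σ x - x)) {e e' : L} (he : e ≠ 0) (he' : e' ≠ 0)
    (hee' : w e = w e') : i ≤ w (σ e / e - σ e' / e') := by
  have hσe : σ e ≠ 0 := by simpa using he
  have hid : σ e / e - σ e' / e' = (σ (e' / e) - e' / e) * -(σ e / e') := by
    rw [map_div₀]
    field_simp
    ring
  rw [hid, w.map_mul, w.map_neg, w.map_div_eq_zero he' ((hinv e).trans hee'), add_zero]
  exact hi _ (w.map_div_eq_zero he hee'.symm).ge

theorem le_map_mul_apply_div_sub_mul (τ : L ≃ₐ[K] L) (hτ : ∀ x, w (τ x) = w x)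
    {i : WithTop Γ} (hi : ∀ x, 0 ≤ w x → i ≤ w (σ x - x)) {e : L} (he : e ≠ 0) :
    i ≤ w ((σ * τ) e / e - σ e / e * (τ e / e)) := by
  have hσe : σ e ≠ 0 := by simpa using he
  have hid : (σ * τ) e / e - σ e / e * (τ e / e) = (σ (τ e / e) - τ e / e) * (σ e / e) := by
    rw [AlgEquiv.mul_apply, map_div₀]
    field_simp
  rw [hid, w.map_mul, map_apply_div_self σ hinv he, add_zero]
  exact hi _ (map_apply_div_self τ hτ he).ge

variable (hres : ∀ x : L, 0 ≤ w x → ∃ y : K, 0 < w (x - algebraMap K L y))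
include hres

theorem min_le_map_apply_sub {e : L} (he : e ≠ 0) (he_min : ∀ x, 0 < w x → w e ≤ w x)
    {i : WithTop Γ} (hi : ∀ x, 0 ≤ w x → i ≤ w (σ x - x)) {x : L} (hx : 0 ≤ w x) :
    min (w (σ e - e)) (w e + i) ≤ w (σ x - x) := by
  obtain ⟨y, hy⟩ := hres x hx
  have hshift : σ x - x = σ (x - algebraMap K L y) - (x - algebraMap K L y) := by
    rw [_root_.map_sub, AlgEquiv.commutes]; ring
  set x' := x - algebraMap K L y
  have hz : 0 ≤ w (x' / e) := by
    rw [← WithTop.add_le_add_iff_right (w.ne_top_iff.mpr he), zero_add, ← w.map_mul,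
      div_mul_cancel₀ _ he]
    exact he_min _ hy
  have hid : σ x - x = σ (x' / e) * (σ e - e) + (σ (x' / e) - x' / e) * e := by
    have : σ x' = σ (x' / e) * σ e := by rw [← _root_.map_mul σ, div_mul_cancel₀ _ he]
    rw [hshift, this]
    nth_rewrite 2 [← div_mul_cancel₀ x' he]
    ring
  rw [hid]
  refine w.map_le_add ?_ ?_
  · rw [w.map_mul, hinv]
    exact (min_le_left _ _).trans (le_add_of_nonneg_left hz)
  · rw [w.map_mul, add_comm (w e)]
    exact (min_le_right _ _).trans (add_le_add_left (hi _ hz) _)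

theorem map_apply_sub_le {e : L} (he : e ≠ 0) (he_pos : 0 < w e)
    (he_min : ∀ x, 0 < w x → w e ≤ w x) {i : WithTop Γ}
    (hi : ∀ x, 0 ≤ w x → i ≤ w (σ x - x)) {x₀ : L} (hx₀ : 0 ≤ w x₀)
    (hi₀ : w (σ x₀ - x₀) = i) : w (σ e - e) ≤ i := by
  induction i using WithTop.recTopCoe with
  | top => exact le_top
  | coe γ =>
    have h := min_le_map_apply_sub σ hinv hres he he_min hi hx₀
    rw [hi₀, min_le_iff] at h
    refine h.resolve_right fun h' => he_pos.not_ge ?_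
    exact (WithTop.add_le_add_iff_right WithTop.coe_ne_top).mp (h'.trans (zero_add _).ge)

end Galois

end AddValuation

theorem theta_homomorphism_of_ramification_filtration_general
    (K L : Type) [Field K] [Field L] [Algebra K L]
    (w : AddValuation L (WithTop (ℤ ×ₗ ℤ)))
    -- the valuation is Galois invariant
    (hinv : ∀ (σ : L ≃ₐ[K] L) (x : L), w (σ x) = w x)
    -- trivial residue extension: every element of `W` is congruent mod `m'` to one of `V`
    (hres : ∀ x : L, 0 ≤ w x → ∃ y : K, 0 ≤ w (algebraMap K L y) ∧
      0 < w (x - algebraMap K L y))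
    -- `i_G(σ) = min {w (σ x − x) : x ∈ W}`, with `i_G(1) = ⊤`
    (iG : (L ≃ₐ[K] L) → WithTop (ℤ ×ₗ ℤ)) (hiG1 : iG 1 = ⊤)
    (hiG : ∀ σ : L ≃ₐ[K] L, σ ≠ 1 →
      (∃ x : L, 0 ≤ w x ∧ w (σ x - x) = iG σ) ∧
      (∀ x : L, 0 ≤ w x → iG σ ≤ w (σ x - x)))
    -- a nonnegative index `t`
    (t : ℤ ×ₗ ℤ) :
    -- (a) for `σ ∈ G_t` (i.e. `i_G σ ≥ t + ε_L`) and `w e = ε_L`, `σ(e)/e` lies in `U_t`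
    (∀ σ : L ≃ₐ[K] L, ((t + toLex (0, 1) : ℤ ×ₗ ℤ) : WithTop (ℤ ×ₗ ℤ)) ≤ iG σ →
      ∀ e : L, w e = ((toLex (0, 1) : ℤ ×ₗ ℤ) : WithTop (ℤ ×ₗ ℤ)) →
        (t : WithTop (ℤ ×ₗ ℤ)) ≤ w (σ e / e - 1)) ∧
    -- (b) the class of `σ(e)/e` in `U_t/U_{t+ε_L}` does not depend on the choice of `e`
    (∀ σ : L ≃ₐ[K] L, ((t + toLex (0, 1) : ℤ ×ₗ ℤ) : WithTop (ℤ ×ₗ ℤ)) ≤ iG σ →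
      ∀ e e' : L, w e = ((toLex (0, 1) : ℤ ×ₗ ℤ) : WithTop (ℤ ×ₗ ℤ)) →
        w e' = ((toLex (0, 1) : ℤ ×ₗ ℤ) : WithTop (ℤ ×ₗ ℤ)) →
        ((t + toLex (0, 1) : ℤ ×ₗ ℤ) : WithTop (ℤ ×ₗ ℤ)) ≤ w (σ e / e - σ e' / e')) ∧
    -- (c) `θ_t` is a group homomorphism `G_t → U_t/U_{t+ε_L}`
    (∀ σ τ : L ≃ₐ[K] L, ((t + toLex (0, 1) : ℤ ×ₗ ℤ) : WithTop (ℤ ×ₗ ℤ)) ≤ iG σ →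
      ((t + toLex (0, 1) : ℤ ×ₗ ℤ) : WithTop (ℤ ×ₗ ℤ)) ≤ iG τ →
      ∀ e : L, w e = ((toLex (0, 1) : ℤ ×ₗ ℤ) : WithTop (ℤ ×ₗ ℤ)) →
        ((t + toLex (0, 1) : ℤ ×ₗ ℤ) : WithTop (ℤ ×ₗ ℤ)) ≤
          w ((σ * τ) e / e - (σ e / e) * (τ e / e))) ∧
    -- (d) the kernel of `θ_t` is exactly `G_{t+ε_L}`, whence the embedding
    --     `G_t/G_{t+ε_L} ↪ U_t/U_{t+ε_L}`
    (∀ σ : L ≃ₐ[K] L, ((t + toLex (0, 1) : ℤ ×ₗ ℤ) : WithTop (ℤ ×ₗ ℤ)) ≤ iG σ →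
      ∀ e : L, w e = ((toLex (0, 1) : ℤ ×ₗ ℤ) : WithTop (ℤ ×ₗ ℤ)) →
        ((((t + toLex (0, 1) + toLex (0, 1) : ℤ ×ₗ ℤ)) : WithTop (ℤ ×ₗ ℤ)) ≤ iG σ ↔
          ((t + toLex (0, 1) : ℤ ×ₗ ℤ) : WithTop (ℤ ×ₗ ℤ)) ≤ w (σ e / e - 1))) := by
  have hres' : ∀ x, 0 ≤ w x → ∃ y : K, 0 < w (x - algebraMap K L y) :=
    fun x hx => (hres x hx).imp fun _ => And.right
  have hiG' : ∀ σ : L ≃ₐ[K] L,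
      (∃ x : L, 0 ≤ w x ∧ w (σ x - x) = iG σ) ∧ (∀ x : L, 0 ≤ w x → iG σ ≤ w (σ x - x)) := by
    intro σ
    rcases eq_or_ne σ 1 with rfl | hσ
    · exact ⟨⟨0, by simp, by simp [hiG1]⟩, fun x _ => by simp [hiG1]⟩
    · exact hiG σ hσ
  have hmin : ∀ e : L, w e = ((toLex (0, 1) : ℤ ×ₗ ℤ) : WithTop (ℤ ×ₗ ℤ)) →
      ∀ x, 0 < w x → w e ≤ w x :=
    fun e he x hx => he ▸ WithTop.coe_toLex_zero_one_le_of_pos hx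
  have hne : ∀ e : L, w e = ((toLex (0, 1) : ℤ ×ₗ ℤ) : WithTop (ℤ ×ₗ ℤ)) → e ≠ 0 :=
    fun e he => w.ne_top_iff.mp (he ▸ WithTop.coe_ne_top)
  have hpos : ∀ e : L, w e = ((toLex (0, 1) : ℤ ×ₗ ℤ) : WithTop (ℤ ×ₗ ℤ)) → 0 < w e :=
    fun e he => he ▸ WithTop.coe_pos.mpr (by decide)
  have hθ : ∀ (σ : L ≃ₐ[K] L) (e : L) (s : ℤ ×ₗ ℤ),
      w e = ((toLex (0, 1) : ℤ ×ₗ ℤ) : WithTop (ℤ ×ₗ ℤ)) →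
      ((s : WithTop (ℤ ×ₗ ℤ)) ≤ w (σ e / e - 1) ↔
        ((s + toLex (0, 1) : ℤ ×ₗ ℤ) : WithTop (ℤ ×ₗ ℤ)) ≤ w (σ e - e)) :=
    fun σ e s he => by rw [w.le_map_div_sub_one_iff (hne e he), he, WithTop.coe_add]
  refine ⟨fun σ hσ e he => ?_, fun σ hσ e e' he he' => ?_, fun σ τ hσ _ e he => ?_,
    fun σ _ e he => ⟨fun h => ?_, fun h => ?_⟩⟩
  · exact (hθ σ e t he).2 (hσ.trans ((hiG' σ).2 e (hpos e he).le))
  · exact hσ.trans (w.le_map_apply_div_sub_apply_div σ (hinv σ) (hiG' σ).2 (hne e he)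
      (hne e' he') (he.trans he'.symm))
  · exact hσ.trans (w.le_map_mul_apply_div_sub_mul σ (hinv σ) τ (hinv τ) (hiG' σ).2 (hne e he))
  · exact (hθ σ e _ he).2 (h.trans ((hiG' σ).2 e (hpos e he).le))
  · obtain ⟨x₀, hx₀, hi₀⟩ := (hiG' σ).1
    exact ((hθ σ e _ he).1 h).trans (w.map_apply_sub_le σ (hinv σ) hres' (hne e he) (hpos e he)
      (hmin e he) (hiG' σ).2 hx₀ hi₀)

/-- Let `V ⊆ W` be a monogenic integral extension of henselian
`ℤ²`-valuation rings, with `L/K` Galois of group `G`, trivial and perfect residue extension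
at the maximal ideals and `[L:K] = [κ(p'):κ(p)]` (so that `ε_K = |G|·ε_L`, encoded below by
the shape of the value group of `K`).  With `j_G(σ) = i_G(σ) − ε_K/|G| = i_G(σ) − ε_L`,
`i_G(σ) = min {w(σx − x) : x ∈ W}`, and the lower ramification filtration
`G_t = {σ : j_G(σ) ≥ t}`, for every `t ≥ 0` in `Γ_W = ℤ ×ₗ ℤ` the map
`θ_t : σ ↦ class of σ(e)/e in U_t/U_{t+ε_L}` (for any `e` with `w(e) = ε_L`) is a
well-defined group homomorphism on `G_t` with kernel `G_{t+ε_L}`; consequently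
`G_t/G_{t+ε_L}` embeds into `U_t/U_{t+ε_L}`. -/
theorem theta_homomorphism_of_ramification_filtration
    (K L : Type) [Field K] [Field L] [Algebra K L] [FiniteDimensional K L] [IsGalois K L]
    (w : AddValuation L (WithTop (ℤ ×ₗ ℤ)))
    -- the value group of `W` is `ℤ ×ₗ ℤ` (so `ε_L = (0,1)`)
    (hsurj : ∀ γ : ℤ ×ₗ ℤ, ∃ x : L, w x = (γ : WithTop (ℤ ×ₗ ℤ)))
    -- the valuation is Galois invariant
    (hinv : ∀ (σ : L ≃ₐ[K] L) (x : L), w (σ x) = w x)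
    -- the value group of `K` is `ℤ × (|G|·ℤ)`, i.e. `ε_K = |G| • ε_L`
    (hK : ∀ (x : K) (γ : ℤ ×ₗ ℤ), w (algebraMap K L x) = (γ : WithTop (ℤ ×ₗ ℤ)) →
      ∃ a b : ℤ, γ = toLex (a, (Nat.card (L ≃ₐ[K] L) : ℤ) * b))
    (hKsurj : ∀ a b : ℤ, ∃ x : K,
      w (algebraMap K L x) = ((toLex (a, (Nat.card (L ≃ₐ[K] L) : ℤ) * b) : ℤ ×ₗ ℤ) :
        WithTop (ℤ ×ₗ ℤ)))
    -- trivial residue extension: every element of `W` is congruent mod `m'` to one of `V`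
    (hres : ∀ x : L, 0 ≤ w x → ∃ y : K, 0 ≤ w (algebraMap K L y) ∧
      0 < w (x - algebraMap K L y))
    -- `V` is henselian
    (VK : Subring K) (hVK : ∀ x : K, x ∈ VK ↔ 0 ≤ w (algebraMap K L x))
    [HenselianLocalRing VK]
    -- `W = V[a]` is a monogenic integral extension of `V`
    (a : L) (ha : 0 ≤ w a)
    (hmono : ∀ x : L, 0 ≤ w x → ∃ q : K[X],
      (∀ i, 0 ≤ w (algebraMap K L (q.coeff i))) ∧ x = Polynomial.aeval a q)
    -- `i_G(σ) = min {w (σ x − x) : x ∈ W}`, with `i_G(1) = ⊤`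
    (iG : (L ≃ₐ[K] L) → WithTop (ℤ ×ₗ ℤ)) (hiG1 : iG 1 = ⊤)
    (hiG : ∀ σ : L ≃ₐ[K] L, σ ≠ 1 →
      (∃ x : L, 0 ≤ w x ∧ w (σ x - x) = iG σ) ∧
      (∀ x : L, 0 ≤ w x → iG σ ≤ w (σ x - x)))
    -- a nonnegative index `t`
    (t : ℤ ×ₗ ℤ) (ht : 0 ≤ t) :
    -- (a) for `σ ∈ G_t` (i.e. `i_G σ ≥ t + ε_L`) and `w e = ε_L`, `σ(e)/e` lies in `U_t`
    (∀ σ : L ≃ₐ[K] L, ((t + toLex (0, 1) : ℤ ×ₗ ℤ) : WithTop (ℤ ×ₗ ℤ)) ≤ iG σ →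
      ∀ e : L, w e = ((toLex (0, 1) : ℤ ×ₗ ℤ) : WithTop (ℤ ×ₗ ℤ)) →
        (t : WithTop (ℤ ×ₗ ℤ)) ≤ w (σ e / e - 1)) ∧
    -- (b) the class of `σ(e)/e` in `U_t/U_{t+ε_L}` does not depend on the choice of `e`
    (∀ σ : L ≃ₐ[K] L, ((t + toLex (0, 1) : ℤ ×ₗ ℤ) : WithTop (ℤ ×ₗ ℤ)) ≤ iG σ →
      ∀ e e' : L, w e = ((toLex (0, 1) : ℤ ×ₗ ℤ) : WithTop (ℤ ×ₗ ℤ)) →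
        w e' = ((toLex (0, 1) : ℤ ×ₗ ℤ) : WithTop (ℤ ×ₗ ℤ)) →
        ((t + toLex (0, 1) : ℤ ×ₗ ℤ) : WithTop (ℤ ×ₗ ℤ)) ≤ w (σ e / e - σ e' / e')) ∧
    -- (c) `θ_t` is a group homomorphism `G_t → U_t/U_{t+ε_L}`
    (∀ σ τ : L ≃ₐ[K] L, ((t + toLex (0, 1) : ℤ ×ₗ ℤ) : WithTop (ℤ ×ₗ ℤ)) ≤ iG σ →
      ((t + toLex (0, 1) : ℤ ×ₗ ℤ) : WithTop (ℤ ×ₗ ℤ)) ≤ iG τ →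
      ∀ e : L, w e = ((toLex (0, 1) : ℤ ×ₗ ℤ) : WithTop (ℤ ×ₗ ℤ)) →
        ((t + toLex (0, 1) : ℤ ×ₗ ℤ) : WithTop (ℤ ×ₗ ℤ)) ≤
          w ((σ * τ) e / e - (σ e / e) * (τ e / e))) ∧
    -- (d) the kernel of `θ_t` is exactly `G_{t+ε_L}`, whence the embedding
    --     `G_t/G_{t+ε_L} ↪ U_t/U_{t+ε_L}`
    (∀ σ : L ≃ₐ[K] L, ((t + toLex (0, 1) : ℤ ×ₗ ℤ) : WithTop (ℤ ×ₗ ℤ)) ≤ iG σ →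
      ∀ e : L, w e = ((toLex (0, 1) : ℤ ×ₗ ℤ) : WithTop (ℤ ×ₗ ℤ)) →
        ((((t + toLex (0, 1) + toLex (0, 1) : ℤ ×ₗ ℤ)) : WithTop (ℤ ×ₗ ℤ)) ≤ iG σ ↔
          ((t + toLex (0, 1) : ℤ ×ₗ ℤ) : WithTop (ℤ ×ₗ ℤ)) ≤ w (σ e / e - 1))) :=
  theta_homomorphism_of_ramification_filtration_general K L w hinv hres iG hiG1 hiG t
end

section
/- In the setting of the ramification filtration of a monogenic integral extension W/V of henselian ℤ²-valuation rings with Galois group G: if the residue field κ(m') has characteristic 0, then G_{ε_L} = {1} and G is cyclic; if κ(m') has characteristic p > 0, then each quotient G_t/G_{t+ε_L} for t > 0 is an elementary abelian p-group (a direct product of cyclic groups of order p), G_{ε_L} is a p-group, and G/G_{ε_L} is cyclic of order prime to p. -/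
/-!
Everything is read off the generator `a`: by the Leibniz rule for `σ(xy) - xy`, an element
`σ` moves every integral polynomial in `a` at least as much as it moves `a`, so
`i_G(σ) = w(σa - a)`. Fix `π` of value `ε = (0,1)`. Since the residue extension is trivial, `σ`
acts trivially on the residue field, so `σ ↦ σπ/π mod 𝔪` is a homomorphism `G → κ(m')`; its
kernel is `G_ε`. Thus `G/G_ε` embeds into a field: it is cyclic, and has no element of order `p`
in characteristic `p` because Frobenius is injective. For `σ ∈ G_ε` one has
`σⁿa - a ≡ n(σa - a)` modulo terms of value `≥ w(σa - a) + ε`; hence `G_ε` has no element of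
order `n` when `w(n) = 0` (so `G_ε = 1` in characteristic `0` and `G_ε` is a `p`-group otherwise),
and `σᵖ ∈ G_{t+ε}` for `σ ∈ G_t`. The commutator bound comes from the same second-order
estimate applied to `[σ, τ]a - a = (στ)b - (τσ)b`.
-/

open scoped Polynomial

/-- The lower ramification filtration `G_t = {σ : j_G(σ) ≥ t} = {σ : i_G(σ) ≥ t + ε_L}`
attached to the function `i_G` of a monogenic integral extension of henselian
`ℤ²`-valuation rings (here `ε_L = (0,1)` is the minimal positive element of the value
group `ℤ ×ₗ ℤ`). -/
def ramificationFiltration {G : Type*} [Group G] (iG : G → WithTop (ℤ ×ₗ ℤ))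
    (h1 : iG 1 = ⊤) (hmul : ∀ σ τ : G, min (iG σ) (iG τ) ≤ iG (σ * τ))
    (hsymm : ∀ σ : G, iG σ⁻¹ = iG σ) (t : ℤ ×ₗ ℤ) : Subgroup G where
  carrier := {σ | ((t + toLex (0, 1) : ℤ ×ₗ ℤ) : WithTop (ℤ ×ₗ ℤ)) ≤ iG σ}
  one_mem' := by simp [h1]
  mul_mem' := fun {σ τ} hσ hτ => le_trans (le_min hσ hτ) (hmul σ τ)
  inv_mem' := fun {σ} hσ => by simpa [hsymm σ] using hσ

theorem mem_ramificationFiltration_iff {G : Type*} [Group G] (iG : G → WithTop (ℤ ×ₗ ℤ))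
    (h1 : iG 1 = ⊤) (hmul : ∀ σ τ : G, min (iG σ) (iG τ) ≤ iG (σ * τ))
    (hsymm : ∀ σ : G, iG σ⁻¹ = iG σ) (t : ℤ ×ₗ ℤ) (σ : G) :
    σ ∈ ramificationFiltration iG h1 hmul hsymm t ↔
      ((t + toLex (0, 1) : ℤ ×ₗ ℤ) : WithTop (ℤ ×ₗ ℤ)) ≤ iG σ := Iff.rfl

open Polynomial IsLocalRing

local notation "ε" => (toLex (0, 1) : ℤ ×ₗ ℤ)

lemma Prod.Lex.lt_iff_add_toLex_zero_one_le {γ δ : ℤ ×ₗ ℤ} : γ < δ ↔ γ + ε ≤ δ := by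
  obtain ⟨⟨a, b⟩, rfl⟩ := toLex.surjective γ
  obtain ⟨⟨c, d⟩, rfl⟩ := toLex.surjective δ
  rw [← toLex_add, Prod.Lex.toLex_lt_toLex, Prod.Lex.toLex_le_toLex]
  simp only [Prod.mk_add_mk, add_zero]
  omega

lemma WithTop.coe_lt_iff_coe_add_toLex_zero_one_le {γ : ℤ ×ₗ ℤ} {c : WithTop (ℤ ×ₗ ℤ)} :
    (γ : WithTop (ℤ ×ₗ ℤ)) < c ↔ ((γ + ε : ℤ ×ₗ ℤ) : WithTop (ℤ ×ₗ ℤ)) ≤ c := by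
  induction c with
  | top => simp
  | coe δ => simpa only [WithTop.coe_lt_coe, WithTop.coe_le_coe] using
      Prod.Lex.lt_iff_add_toLex_zero_one_le

lemma WithTop.pos_iff_toLex_zero_one_le {c : WithTop (ℤ ×ₗ ℤ)} :
    0 < c ↔ (ε : WithTop (ℤ ×ₗ ℤ)) ≤ c := by
  simpa using WithTop.coe_lt_iff_coe_add_toLex_zero_one_le (γ := 0) (c := c)

lemma WithTop.toLex_zero_one_pos : (0 : WithTop (ℤ ×ₗ ℤ)) < ε :=
  WithTop.pos_iff_toLex_zero_one_le.2 le_rfl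

namespace AddValuation

variable {L Γ : Type*} [Field L] [LinearOrderedAddCommGroupWithTop Γ] (w : AddValuation L Γ)

def valuationSubring : ValuationSubring L := (toValuation w).valuationSubring

lemma mem_valuationSubring_iff {x : L} : x ∈ w.valuationSubring ↔ 0 ≤ w x := Iff.rfl

lemma mem_maximalIdeal_valuationSubring_iff {x : w.valuationSubring} :
    x ∈ maximalIdeal w.valuationSubring ↔ 0 < w x :=
  (toValuation w).mem_maximalIdeal_iff

lemma residue_eq_residue_iff {x y : w.valuationSubring} :
    residue _ x = residue _ y ↔ 0 < w (x - y) := by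
  rw [← sub_eq_zero, ← _root_.map_sub, residue_eq_zero_iff,
    mem_maximalIdeal_valuationSubring_iff]
  rfl

lemma natCast_nonneg (n : ℕ) : 0 ≤ w n :=
  (w.mem_valuationSubring_iff).1 (natCast_mem _ n)

lemma charP_residueField {p : ℕ} (hp : p.Prime) (hwp : 0 < w p) :
    CharP (ResidueField w.valuationSubring) p := by
  rw [CharP.charP_iff_prime_eq_zero hp, ← map_natCast (residue _), residue_eq_zero_iff,
    mem_maximalIdeal_valuationSubring_iff]
  exact_mod_cast hwp

lemma map_natCast_eq_zero_of_not_dvd {p n : ℕ} (hp : p.Prime) (hwp : 0 < w p)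
    (hn : ¬ p ∣ n) : w n = 0 := by
  have := w.charP_residueField hp hwp
  have hres : residue w.valuationSubring n ≠ 0 := by
    rw [map_natCast]; exact (CharP.cast_eq_zero_iff _ p n).not.2 hn
  rw [ne_eq, residue_eq_zero_iff, mem_maximalIdeal_valuationSubring_iff] at hres
  exact le_antisymm (not_lt.1 (by exact_mod_cast hres)) (w.natCast_nonneg n)

end AddValuation

section GaloisAction

variable {K L Γ : Type*} [Field K] [Field L] [Algebra K L] [LinearOrderedAddCommGroupWithTop Γ]
  {w : AddValuation L Γ}

lemma le_map_apply_mul_sub (σ : L ≃ₐ[K] L) (hw : ∀ x, w (σ x) = w x) (x y : L) :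
    min (w x + w (σ y - y)) (w y + w (σ x - x)) ≤ w (σ (x * y) - x * y) := by
  have h : σ (x * y) - x * y = σ x * (σ y - y) + y * (σ x - x) := by rw [map_mul]; ring
  rw [h, ← hw x, ← w.map_mul, ← w.map_mul]
  exact w.map_add _ _

lemma le_map_apply_pow_sub (σ : L ≃ₐ[K] L) (hw : ∀ x, w (σ x) = w x) {a : L} (ha : 0 ≤ w a)
    {δ : Γ} (hδ : δ ≤ w (σ a - a)) (n : ℕ) : δ ≤ w (σ (a ^ n) - a ^ n) := by
  induction n with
  | zero => simp
  | succ n ih =>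
    rw [pow_succ]
    refine le_trans (le_min ?_ ?_) (le_map_apply_mul_sub σ hw _ _)
    · exact le_add_of_nonneg_of_le (by rw [w.map_pow]; exact nsmul_nonneg ha n) hδ
    · exact le_add_of_nonneg_of_le ha ih

lemma le_map_apply_aeval_sub (σ : L ≃ₐ[K] L) (hw : ∀ x, w (σ x) = w x) {a : L} (ha : 0 ≤ w a)
    {δ : Γ} (hδ : δ ≤ w (σ a - a)) {q : K[X]} (hq : ∀ i, 0 ≤ w (algebraMap K L (q.coeff i))) :
    δ ≤ w (σ (aeval a q) - aeval a q) := by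
  rw [aeval_eq_sum_range, map_sum, ← Finset.sum_sub_distrib]
  refine w.map_le_sum fun i _ => ?_
  rw [map_smul, ← smul_sub, Algebra.smul_def, w.map_mul]
  exact le_add_of_nonneg_of_le (hq i) (le_map_apply_pow_sub σ hw ha hδ i)

lemma eq_one_of_forall_apply_eq (σ : L ≃ₐ[K] L) (h : ∀ x, 0 ≤ w x → σ x = x) : σ = 1 := by
  ext x
  rcases w.valuationSubring.mem_or_inv_mem x with hx | hx
  · exact h x hx
  · simpa using congrArg Inv.inv (h x⁻¹ hx)

lemma eq_one_of_apply_eq {a : L} (hmono : ∀ x, 0 ≤ w x → ∃ q : K[X], x = aeval a q)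
    (σ : L ≃ₐ[K] L) (hσ : σ a = a) : σ = 1 :=
  eq_one_of_forall_apply_eq σ fun x hx => by
    obtain ⟨q, rfl⟩ := hmono x hx
    rw [← aeval_algHom_apply, hσ]

lemma map_apply_sub_self_pos (σ : L ≃ₐ[K] L) (hw : ∀ x, w (σ x) = w x)
    (hres : ∀ x, 0 ≤ w x → ∃ y : K, 0 < w (x - algebraMap K L y)) {x : L} (hx : 0 ≤ w x) :
    0 < w (σ x - x) := by
  obtain ⟨y, hy⟩ := hres x hx
  have h : σ x - x = σ (x - algebraMap K L y) + -(x - algebraMap K L y) := by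
    rw [map_sub, AlgEquiv.commutes]; ring
  rw [h]
  exact w.map_lt_add (by rwa [hw]) (by rwa [w.map_neg])

lemma map_apply_div_self (σ : L ≃ₐ[K] L) (hw : ∀ x, w (σ x) = w x) {π : L} (hπ : π ≠ 0) :
    w (σ π / π) = 0 := by
  rw [w.map_div, hw, LinearOrderedAddCommGroupWithTop.sub_self_eq_zero_iff_ne_top]
  exact w.ne_top_iff.2 hπ

noncomputable def residueCharacter (hinvar : ∀ (σ : L ≃ₐ[K] L) x, w (σ x) = w x)
    (hpos : ∀ (σ : L ≃ₐ[K] L) x, 0 ≤ w x → 0 < w (σ x - x)) {π : L} (hπ : π ≠ 0) :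
    (L ≃ₐ[K] L) →* ResidueField w.valuationSubring where
  toFun σ := residue _
    ⟨σ π / π, w.mem_valuationSubring_iff.2 (map_apply_div_self σ (hinvar σ) hπ).ge⟩
  map_one' := by
    rw [← map_one (residue _), w.residue_eq_residue_iff]
    simp [div_self hπ]
  map_mul' σ τ := by
    rw [← map_mul, w.residue_eq_residue_iff]
    -- the cocycle relation `(στ)π/π = σ(τπ/π) · σπ/π`
    have h : (σ * τ) π / π - σ π / π * (τ π / π) = σ π / π * (σ (τ π / π) - τ π / π) := by
      have : σ π ≠ 0 := by simpa using hπ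
      rw [AlgEquiv.mul_apply, map_div₀]
      field_simp
    change 0 < w ((σ * τ) π / π - σ π / π * (τ π / π))
    rw [h, w.map_mul, map_apply_div_self σ (hinvar σ) hπ, zero_add]
    exact hpos σ _ (map_apply_div_self τ (hinvar τ) hπ).ge

lemma residueCharacter_eq_one_iff (hinvar : ∀ (σ : L ≃ₐ[K] L) x, w (σ x) = w x)
    (hpos : ∀ (σ : L ≃ₐ[K] L) x, 0 ≤ w x → 0 < w (σ x - x)) {π : L} (hπ : π ≠ 0)
    (σ : L ≃ₐ[K] L) : residueCharacter hinvar hpos hπ σ = 1 ↔ w π < w (σ π - π) := by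
  change residue _ _ = 1 ↔ _
  rw [← map_one (residue _), w.residue_eq_residue_iff]
  change 0 < w (σ π / π - 1) ↔ _
  rw [div_sub_one hπ, w.map_div, LinearOrderedAddCommGroupWithTop.sub_pos,
    or_iff_left (w.ne_top_iff.2 hπ)]

lemma add_le_map_apply_sub_of_le (σ : L ≃ₐ[K] L) (hw : ∀ x, w (σ x) = w x) {π : L}
    (hπ0 : π ≠ 0) (hπ : 0 ≤ w π) {δ : Γ} (hδ : ∀ x, 0 ≤ w x → δ ≤ w (σ x - x)) {y : L}
    (hy : w π + w π ≤ w y) : δ + w π ≤ w (σ y - y) := by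
  obtain ⟨z, rfl⟩ : ∃ z, y = π * z := ⟨y / π, by field_simp⟩
  rw [w.map_mul, add_le_add_iff_right_of_ne_top (w.ne_top_iff.2 hπ0)] at hy
  refine le_trans (le_min ?_ ?_) (le_map_apply_mul_sub σ hw π z)
  · rw [add_comm]; gcongr; exact hδ z (hπ.trans hy)
  · rw [add_comm]; exact add_le_add hy (hδ π hπ)

lemma pow_apply_sub_self_sub_nsmul (σ : L ≃ₐ[K] L) (x : L) (n : ℕ) :
    (σ ^ n) x - x - n * (σ x - x) = ∑ k ∈ Finset.range n, ((σ ^ k) (σ x - x) - (σ x - x)) := by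
  induction n with
  | zero => simp
  | succ n ih =>
    rw [Finset.sum_range_succ, ← ih, pow_succ, AlgEquiv.mul_apply, map_sub, Nat.cast_succ]
    ring

lemma map_apply_sub_self_le_pow (σ : L ≃ₐ[K] L) (hw : ∀ x, w (σ x) = w x) (x : L) (n : ℕ) :
    w (σ x - x) ≤ w ((σ ^ n) x - x) := by
  induction n with
  | zero => simp
  | succ n ih =>
    have h : (σ ^ (n + 1)) x - x = σ ((σ ^ n) x - x) + (σ x - x) := by
      rw [pow_succ', AlgEquiv.mul_apply, map_sub]; ring
    rw [h]
    exact le_trans (le_min (ih.trans (hw _).ge) le_rfl) (w.map_add _ _)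

variable {a π : L}

lemma add_le_map_pow_apply_sub_self_sub_nsmul (hinvar : ∀ (σ : L ≃ₐ[K] L) x, w (σ x) = w x)
    (hgen : ∀ (σ : L ≃ₐ[K] L) x, 0 ≤ w x → w (σ a - a) ≤ w (σ x - x)) (hπ0 : π ≠ 0)
    (hπ : 0 ≤ w π) {σ : L ≃ₐ[K] L} (hσ : w π + w π ≤ w (σ a - a)) (n : ℕ) :
    w (σ a - a) + w π ≤ w ((σ ^ n) a - a - n * (σ a - a)) := by
  rw [pow_apply_sub_self_sub_nsmul]
  refine w.map_le_sum fun k _ => ?_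
  calc w (σ a - a) + w π ≤ w ((σ ^ k) a - a) + w π := by
        gcongr; exact map_apply_sub_self_le_pow σ (hinvar σ) a k
    _ ≤ _ := add_le_map_apply_sub_of_le (σ ^ k) (hinvar _) hπ0 hπ (hgen (σ ^ k)) hσ

lemma add_le_map_pow_apply_sub_self (hinvar : ∀ (σ : L ≃ₐ[K] L) x, w (σ x) = w x)
    (hgen : ∀ (σ : L ≃ₐ[K] L) x, 0 ≤ w x → w (σ a - a) ≤ w (σ x - x)) (hπ0 : π ≠ 0)
    (hπ : 0 ≤ w π) {σ : L ≃ₐ[K] L} (hσ : w π + w π ≤ w (σ a - a)) {n : ℕ}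
    (hn : w π ≤ w n) : w (σ a - a) + w π ≤ w ((σ ^ n) a - a) := by
  have h : (σ ^ n) a - a = n * (σ a - a) + ((σ ^ n) a - a - n * (σ a - a)) := by ring
  rw [h]
  refine le_trans (le_min ?_ (add_le_map_pow_apply_sub_self_sub_nsmul hinvar hgen hπ0 hπ hσ n))
    (w.map_add _ _)
  rw [w.map_mul, add_comm]
  gcongr

lemma eq_one_of_pow_eq_one (hinvar : ∀ (σ : L ≃ₐ[K] L) x, w (σ x) = w x)
    (hgen : ∀ (σ : L ≃ₐ[K] L) x, 0 ≤ w x → w (σ a - a) ≤ w (σ x - x))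
    (hfaith : ∀ σ : L ≃ₐ[K] L, σ a = a → σ = 1) (hπ0 : π ≠ 0) (hπ : 0 < w π)
    {σ : L ≃ₐ[K] L} (hσ : w π + w π ≤ w (σ a - a)) {n : ℕ} (hn : w n = 0)
    (hσn : σ ^ n = 1) : σ = 1 := by
  refine hfaith σ (sub_eq_zero.1 (w.top_iff.1 (not_ne_iff.1 fun hne => ?_)))
  have h := add_le_map_pow_apply_sub_self_sub_nsmul hinvar hgen hπ0 hπ.le hσ n
  rw [hσn, AlgEquiv.one_apply, sub_self, zero_sub, w.map_neg, w.map_mul, hn, zero_add] at h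
  exact h.not_gt (by simpa using (add_lt_add_iff_right_of_ne_top hne).2 hπ)

lemma add_le_map_commutator_apply_sub (hinvar : ∀ (σ : L ≃ₐ[K] L) x, w (σ x) = w x)
    (hgen : ∀ (σ : L ≃ₐ[K] L) x, 0 ≤ w x → w (σ a - a) ≤ w (σ x - x)) (ha : 0 ≤ w a)
    (hπ0 : π ≠ 0) (hπ : 0 ≤ w π) {σ τ : L ≃ₐ[K] L} (hσ : w π + w π ≤ w (σ a - a))
    (hτ : w π + w π ≤ w (τ a - a)) :
    min (w (σ a - a)) (w (τ a - a)) + w π ≤ w ((σ * τ * σ⁻¹ * τ⁻¹) a - a) := by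
  set b := (τ * σ)⁻¹ a
  have hb : 0 ≤ w b := by rwa [hinvar]
  have h : (σ * τ * σ⁻¹ * τ⁻¹) a - a
      = (σ (τ b - b) - (τ b - b)) - (τ (σ b - b) - (σ b - b)) := by
    have hab : a = (τ * σ) b := by simp [b]
    rw [show σ * τ * σ⁻¹ * τ⁻¹ = σ * τ * (τ * σ)⁻¹ by group, AlgEquiv.mul_apply _ (τ * σ)⁻¹]
    change (σ * τ) b - a = _
    rw [hab]
    simp only [AlgEquiv.mul_apply, map_sub]
    ring
  have hστ := add_le_map_apply_sub_of_le σ (hinvar σ) hπ0 hπ (hgen σ) (hτ.trans (hgen τ b hb))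
  have hτσ := add_le_map_apply_sub_of_le τ (hinvar τ) hπ0 hπ (hgen τ) (hσ.trans (hgen σ b hb))
  rw [h]
  refine w.map_le_sub ?_ ?_
  · exact le_trans (by gcongr; exact min_le_left _ _) hστ
  · exact le_trans (by gcongr; exact min_le_right _ _) hτσ

end GaloisAction

section DiscreteValueGroup

variable {K L : Type*} [Field K] [Field L] [Algebra K L]
  {w : AddValuation L (WithTop (ℤ ×ₗ ℤ))} {a π : L}

lemma le_map_apply_sub_of_le_map_apply_uniformizer_sub (σ : L ≃ₐ[K] L)
    (hw : ∀ x, w (σ x) = w x) (hres : ∀ x, 0 ≤ w x → ∃ y : K, 0 < w (x - algebraMap K L y))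
    (hπ : w π = ε) (hσπ : ((ε + ε : ℤ ×ₗ ℤ) : WithTop (ℤ ×ₗ ℤ)) ≤ w (σ π - π)) {x : L}
    (hx : 0 ≤ w x) : ((ε + ε : ℤ ×ₗ ℤ) : WithTop (ℤ ×ₗ ℤ)) ≤ w (σ x - x) := by
  have hπ0 : π ≠ 0 := w.ne_top_iff.1 (hπ ▸ WithTop.coe_ne_top)
  obtain ⟨y, hy⟩ := hres x hx
  obtain ⟨z, hz⟩ : ∃ z, x - algebraMap K L y = π * z :=
    ⟨(x - algebraMap K L y) / π, by field_simp⟩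
  have hz0 : 0 ≤ w z := by
    rw [WithTop.pos_iff_toLex_zero_one_le, hz, w.map_mul, hπ] at hy
    exact (add_le_add_iff_right_of_ne_top WithTop.coe_ne_top).1 ((add_zero _).trans_le hy)
  have h : σ x - x = σ (π * z) - π * z := by
    rw [← hz, map_sub, AlgEquiv.commutes]; ring
  rw [h, WithTop.coe_add]
  refine le_trans (le_min ?_ ?_) (le_map_apply_mul_sub σ hw π z)
  · rw [hπ]
    gcongr
    exact WithTop.pos_iff_toLex_zero_one_le.1 (map_apply_sub_self_pos σ hw hres hz0)
  · rw [← WithTop.coe_add]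
    exact le_add_of_nonneg_of_le hz0 hσπ

lemma residueCharacter_eq_one_iff_le_map_apply_sub
    (hinvar : ∀ (σ : L ≃ₐ[K] L) x, w (σ x) = w x)
    (hpos : ∀ (σ : L ≃ₐ[K] L) x, 0 ≤ w x → 0 < w (σ x - x))
    (hres : ∀ x, 0 ≤ w x → ∃ y : K, 0 < w (x - algebraMap K L y)) (ha : 0 ≤ w a)
    (hgen : ∀ (σ : L ≃ₐ[K] L) x, 0 ≤ w x → w (σ a - a) ≤ w (σ x - x)) (hπ0 : π ≠ 0)
    (hπ : w π = ε) (σ : L ≃ₐ[K] L) :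
    residueCharacter hinvar hpos hπ0 σ = 1 ↔
      ((ε + ε : ℤ ×ₗ ℤ) : WithTop (ℤ ×ₗ ℤ)) ≤ w (σ a - a) := by
  rw [residueCharacter_eq_one_iff, hπ, WithTop.coe_lt_iff_coe_add_toLex_zero_one_le]
  exact ⟨fun h => le_map_apply_sub_of_le_map_apply_uniformizer_sub σ (hinvar σ) hres hπ h ha,
    fun h => h.trans (hgen σ π (hπ ▸ WithTop.toLex_zero_one_pos.le))⟩

lemma add_self_le_of_coe_add_le (hπ : w π = ε) {t : ℤ ×ₗ ℤ} (ht : 0 < t)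
    {c : WithTop (ℤ ×ₗ ℤ)} (hc : ((t + ε : ℤ ×ₗ ℤ) : WithTop (ℤ ×ₗ ℤ)) ≤ c) :
    w π + w π ≤ c := by
  rw [hπ, ← WithTop.coe_add]
  refine le_trans (WithTop.coe_le_coe.2 ?_) hc
  gcongr
  simpa using Prod.Lex.lt_iff_add_toLex_zero_one_le.1 ht

lemma coe_add_add_le_map_commutator_apply_sub
    (hinvar : ∀ (σ : L ≃ₐ[K] L) x, w (σ x) = w x)
    (hgen : ∀ (σ : L ≃ₐ[K] L) x, 0 ≤ w x → w (σ a - a) ≤ w (σ x - x)) (ha : 0 ≤ w a)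
    (hπ : w π = ε) {t : ℤ ×ₗ ℤ} (ht : 0 < t) {σ τ : L ≃ₐ[K] L}
    (hσ : ((t + ε : ℤ ×ₗ ℤ) : WithTop (ℤ ×ₗ ℤ)) ≤ w (σ a - a))
    (hτ : ((t + ε : ℤ ×ₗ ℤ) : WithTop (ℤ ×ₗ ℤ)) ≤ w (τ a - a)) :
    ((t + ε + ε : ℤ ×ₗ ℤ) : WithTop (ℤ ×ₗ ℤ)) ≤ w ((σ * τ * σ⁻¹ * τ⁻¹) a - a) := by
  have h := add_le_map_commutator_apply_sub hinvar hgen ha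
    (w.ne_top_iff.1 (hπ ▸ WithTop.coe_ne_top)) (hπ ▸ WithTop.toLex_zero_one_pos.le)
    (add_self_le_of_coe_add_le hπ ht hσ) (add_self_le_of_coe_add_le hπ ht hτ)
  rw [hπ] at h
  exact le_trans (by rw [WithTop.coe_add]; gcongr; exact le_min hσ hτ) h

lemma coe_add_add_le_map_pow_apply_sub (hinvar : ∀ (σ : L ≃ₐ[K] L) x, w (σ x) = w x)
    (hgen : ∀ (σ : L ≃ₐ[K] L) x, 0 ≤ w x → w (σ a - a) ≤ w (σ x - x))
    (hπ : w π = ε) {t : ℤ ×ₗ ℤ} (ht : 0 < t) {σ : L ≃ₐ[K] L}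
    (hσ : ((t + ε : ℤ ×ₗ ℤ) : WithTop (ℤ ×ₗ ℤ)) ≤ w (σ a - a)) {n : ℕ} (hn : 0 < w n) :
    ((t + ε + ε : ℤ ×ₗ ℤ) : WithTop (ℤ ×ₗ ℤ)) ≤ w ((σ ^ n) a - a) := by
  have h := add_le_map_pow_apply_sub_self hinvar hgen
    (w.ne_top_iff.1 (hπ ▸ WithTop.coe_ne_top)) (hπ ▸ WithTop.toLex_zero_one_pos.le)
    (add_self_le_of_coe_add_le hπ ht hσ) (hπ ▸ WithTop.pos_iff_toLex_zero_one_le.1 hn)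
  rw [hπ] at h
  exact le_trans (by rw [WithTop.coe_add]; gcongr) h

lemma mem_ramificationFiltration_iff_le_map_apply_sub (ha : 0 ≤ w a)
    (hgen : ∀ (σ : L ≃ₐ[K] L) x, 0 ≤ w x → w (σ a - a) ≤ w (σ x - x))
    {iG : (L ≃ₐ[K] L) → WithTop (ℤ ×ₗ ℤ)} (h1 : iG 1 = ⊤)
    (hiG : ∀ σ : L ≃ₐ[K] L, σ ≠ 1 →
      (∃ x : L, 0 ≤ w x ∧ w (σ x - x) = iG σ) ∧ (∀ x : L, 0 ≤ w x → iG σ ≤ w (σ x - x)))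
    (hmul : ∀ σ τ : L ≃ₐ[K] L, min (iG σ) (iG τ) ≤ iG (σ * τ))
    (hsymm : ∀ σ : L ≃ₐ[K] L, iG σ⁻¹ = iG σ) (t : ℤ ×ₗ ℤ) (σ : L ≃ₐ[K] L) :
    σ ∈ ramificationFiltration iG h1 hmul hsymm t ↔
      ((t + ε : ℤ ×ₗ ℤ) : WithTop (ℤ ×ₗ ℤ)) ≤ w (σ a - a) := by
  rw [mem_ramificationFiltration_iff]
  rcases eq_or_ne σ 1 with rfl | hσ
  · simp [h1]
  obtain ⟨⟨x, hx, hxσ⟩, hle⟩ := hiG σ hσ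
  rw [le_antisymm (hle a ha) (hxσ ▸ hgen σ x hx)]

end DiscreteValueGroup

lemma IsPGroup.of_forall_pow_eq_one_of_not_dvd {G : Type*} [Group G] [Finite G] {p : ℕ}
    (hp : p ≠ 1) (h : ∀ g : G, ∀ m : ℕ, ¬ p ∣ m → g ^ m = 1 → g = 1) : IsPGroup p G :=
  fun g => by
    obtain ⟨k, m, hm, hkm⟩ := Nat.exists_eq_pow_mul_and_not_dvd (orderOf_pos g).ne' p hp
    exact ⟨k, h _ m hm (by rw [← pow_mul, ← hkm, pow_orderOf_eq_one])⟩

lemma MonoidHom.isCyclic_quotient_of_ker_eq {G R : Type*} [Group G] [Finite G] [CommRing R]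
    [IsDomain R] (f : G →* R) {N : Subgroup G} [N.Normal] (h : f.ker = N) :
    IsCyclic (G ⧸ N) :=
  isCyclic_of_injective_ringHom (QuotientGroup.lift N f h.ge)
    ((QuotientGroup.injective_lift_iff N f h.ge).2 h.symm)

lemma MonoidHom.not_dvd_index_of_ker_eq {G R : Type*} [Group G] [Finite G] [CommRing R]
    [IsReduced R] {p : ℕ} [Fact p.Prime] [CharP R p] (f : G →* R) {N : Subgroup G}
    (h : f.ker = N) : ¬ p ∣ N.index := by
  rw [← h, Subgroup.index_eq_card]
  intro hp
  obtain ⟨x, hx⟩ := exists_prime_orderOf_dvd_card' p hp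
  set g := QuotientGroup.lift f.ker f le_rfl
  have hg : Function.Injective g := (QuotientGroup.injective_lift_iff f.ker f le_rfl).2 rfl
  have hgx : g x = 1 := frobenius_inj R p (by
    rw [frobenius_def, frobenius_def, ← map_pow, ← hx, pow_orderOf_eq_one, map_one, one_pow])
  rw [hg (hgx.trans (map_one g).symm), orderOf_one] at hx
  exact (Fact.out : p.Prime).one_lt.ne hx

/-- Structure of the ramification filtration of a monogenic integral
extension `W/V` of henselian `ℤ²`-valuation rings with Galois group `G`: if the residue
field has characteristic `0` then `G_{ε_L} = 1` and `G` is cyclic; if it has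
characteristic `p > 0` then each quotient `G_t/G_{t+ε_L}` (`t > 0`) is elementary abelian
of exponent `p`, `G_{ε_L}` is a `p`-group, and `G/G_{ε_L}` is cyclic of order prime to
`p`. -/
theorem structure_of_ramification_filtration
    (K L : Type) [Field K] [Field L] [Algebra K L] [FiniteDimensional K L]
    (w : AddValuation L (WithTop (ℤ ×ₗ ℤ)))
    (hsurj : ∀ γ : ℤ ×ₗ ℤ, ∃ x : L, w x = (γ : WithTop (ℤ ×ₗ ℤ)))
    (hinvar : ∀ (σ : L ≃ₐ[K] L) (x : L), w (σ x) = w x)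
    (hres : ∀ x : L, 0 ≤ w x → ∃ y : K, 0 ≤ w (algebraMap K L y) ∧
      0 < w (x - algebraMap K L y))
    (a : L) (ha : 0 ≤ w a)
    (hmono : ∀ x : L, 0 ≤ w x → ∃ q : K[X],
      (∀ i, 0 ≤ w (algebraMap K L (q.coeff i))) ∧ x = Polynomial.aeval a q)
    (iG : (L ≃ₐ[K] L) → WithTop (ℤ ×ₗ ℤ)) (h1 : iG 1 = ⊤)
    (hiG : ∀ σ : L ≃ₐ[K] L, σ ≠ 1 →
      (∃ x : L, 0 ≤ w x ∧ w (σ x - x) = iG σ) ∧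
      (∀ x : L, 0 ≤ w x → iG σ ≤ w (σ x - x)))
    (hmul : ∀ σ τ : L ≃ₐ[K] L, min (iG σ) (iG τ) ≤ iG (σ * τ))
    (hsymm : ∀ σ : L ≃ₐ[K] L, iG σ⁻¹ = iG σ)
    (hconj : ∀ σ τ : L ≃ₐ[K] L, iG (τ * σ * τ⁻¹) = iG σ) :
    -- residue characteristic zero
    ((∀ n : ℕ, 0 < n → w ((n : ℕ) : L) = 0) →
      ramificationFiltration iG h1 hmul hsymm (toLex (0, 1)) = ⊥ ∧
      IsCyclic (L ≃ₐ[K] L)) ∧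
    -- residue characteristic `p > 0`
    (∀ p : ℕ, p.Prime → 0 < w ((p : ℕ) : L) →
      (∀ t : ℤ ×ₗ ℤ, 0 < t → ∀ σ τ : L ≃ₐ[K] L,
        σ ∈ ramificationFiltration iG h1 hmul hsymm t →
        τ ∈ ramificationFiltration iG h1 hmul hsymm t →
        σ * τ * σ⁻¹ * τ⁻¹ ∈ ramificationFiltration iG h1 hmul hsymm (t + toLex (0, 1)) ∧
        σ ^ p ∈ ramificationFiltration iG h1 hmul hsymm (t + toLex (0, 1))) ∧
      IsPGroup p ↥(ramificationFiltration iG h1 hmul hsymm (toLex (0, 1))) ∧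
      (haveI : (ramificationFiltration iG h1 hmul hsymm (toLex (0, 1))).Normal :=
        ⟨fun n hn g => by
          rw [mem_ramificationFiltration_iff] at hn ⊢
          rw [hconj n g]; exact hn⟩
       IsCyclic ((L ≃ₐ[K] L) ⧸ ramificationFiltration iG h1 hmul hsymm (toLex (0, 1)))) ∧
      ¬ p ∣ (ramificationFiltration iG h1 hmul hsymm (toLex (0, 1))).index) := by
  have hres' : ∀ x : L, 0 ≤ w x → ∃ y : K, 0 < w (x - algebraMap K L y) :=
    fun x hx => (hres x hx).imp fun _ => And.right
  have hgen : ∀ (σ : L ≃ₐ[K] L) x, 0 ≤ w x → w (σ a - a) ≤ w (σ x - x) := fun σ x hx => by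
    obtain ⟨q, hq, rfl⟩ := hmono x hx
    exact le_map_apply_aeval_sub σ (hinvar σ) ha le_rfl hq
  have hfaith : ∀ σ : L ≃ₐ[K] L, σ a = a → σ = 1 :=
    eq_one_of_apply_eq fun x hx => (hmono x hx).imp fun _ => And.right
  have hmem := mem_ramificationFiltration_iff_le_map_apply_sub ha hgen h1 hiG hmul hsymm
  obtain ⟨π, hπ⟩ := hsurj ε
  have hπ0 : π ≠ 0 := w.ne_top_iff.1 (hπ ▸ WithTop.coe_ne_top)
  set θ := residueCharacter hinvar
    (fun σ _ hx => map_apply_sub_self_pos σ (hinvar σ) hres' hx) hπ0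
  have hker : θ.ker = ramificationFiltration iG h1 hmul hsymm ε := by
    ext σ
    rw [MonoidHom.mem_ker, hmem,
      residueCharacter_eq_one_iff_le_map_apply_sub hinvar _ hres' ha hgen hπ0 hπ]
  have htors : ∀ σ ∈ ramificationFiltration iG h1 hmul hsymm ε, ∀ n : ℕ, w n = 0 →
      σ ^ n = 1 → σ = 1 := fun σ hσ _ =>
    eq_one_of_pow_eq_one hinvar hgen hfaith hπ0 (hπ ▸ WithTop.toLex_zero_one_pos)
      (by rw [hπ, ← WithTop.coe_add]; exact (hmem _ _).1 hσ)
  refine ⟨fun hchar0 => ?_, fun p hp hwp => ?_⟩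
  · have hbot : ramificationFiltration iG h1 hmul hsymm ε = ⊥ :=
      (Subgroup.eq_bot_iff_forall _).2 fun σ hσ =>
        htors σ hσ _ (hchar0 _ (orderOf_pos σ)) (pow_orderOf_eq_one σ)
    exact ⟨hbot, isCyclic_of_injective_ringHom θ ((θ.ker_eq_bot_iff).1 (hker.trans hbot))⟩
  · have := w.charP_residueField hp hwp
    have := Fact.mk hp
    have : (ramificationFiltration iG h1 hmul hsymm ε).Normal := hker ▸ θ.normal_ker
    refine ⟨fun t ht σ τ hσ hτ => ?_, IsPGroup.of_forall_pow_eq_one_of_not_dvd hp.ne_one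
      fun σ m hm hσm => Subtype.ext (htors σ σ.2 m (w.map_natCast_eq_zero_of_not_dvd hp hwp hm)
        (by exact_mod_cast hσm)),
      θ.isCyclic_quotient_of_ker_eq hker, θ.not_dvd_index_of_ker_eq hker⟩
    simp only [hmem] at hσ hτ ⊢
    exact ⟨coe_add_add_le_map_commutator_apply_sub hinvar hgen ha hπ ht hσ hτ,
      coe_add_add_le_map_pow_apply_sub hinvar hgen hπ ht hσ hwp⟩
end

section
/- In the ramification filtration of a monogenic integral extension W/V of henselian ℤ²-valuation rings with Galois group G and residue characteristic p ≥ 0: for every σ ∈ G − G_{ε_L}, one has i_G(σ) = ε_L; and for every σ ∈ G_{ε_L} and every integer n ≠ 0 prime to the residue characteristic, i_G(σ^n) = i_G(σ). Consequently i_G(σ) = i_G(τ) whenever σ and τ generate the same cyclic subgroup of G. -/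
open scoped Polynomial

/-!
Because the integers of `L` are `K`-polynomials in `a`, the displacement `i_G(σ)` is
`w (σ a - a)`; it can only grow along powers of `σ` (`σⁿ a - a` telescopes), so it is constant
on the generators of a cyclic subgroup. Shifting `a` to `c = a - y` with `y ∈ K` of the same
residue gives `0 < w c ≤ ε_L`, the upper bound because `ε_L` is not a value of `K` once
`|G| ≥ 2`. This makes `i_G(σ) > 0`, and discreteness of `ℤ ×ₗ ℤ` gives the first claim.
If `ρ ∈ G_{ε_L}` has `ρ^ℓ = 1`, the telescoping product of the conjugates of `ρ c / c` forces
`w ℓ > 0`; hence every prime dividing the order of an element of `G_{ε_L}` is the residue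
characteristic, and `σⁿ` generates `⟨σ⟩` whenever `p ∤ n`.
-/

theorem Subgroup.zpowers_zpow_eq_of_forall_pow_prime_eq_one {G : Type*} [Group G] {σ : G}
    (hσ : IsOfFinOrder σ) {n : ℤ}
    (h : ∀ ℓ : ℕ, ℓ.Prime → (ℓ : ℤ) ∣ n → ∀ ρ ∈ zpowers σ, ρ ^ ℓ = 1 → ρ = 1) :
    zpowers (σ ^ n) = zpowers σ := by
  refine le_antisymm (zpowers_le.mpr (zpow_mem_zpowers σ n))
    (zpowers_le.mpr (mem_zpowers_zpow_iff.mpr (Nat.coprime_of_dvd fun ℓ hℓ hℓn hℓσ => ?_)))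
  have hord : orderOf (σ ^ (orderOf σ / ℓ)) = ℓ :=
    orderOf_pow_orderOf_div hσ.orderOf_pos.ne' hℓσ
  have hρℓ : (σ ^ (orderOf σ / ℓ)) ^ ℓ = 1 := by
    simpa only [hord] using pow_orderOf_eq_one (σ ^ (orderOf σ / ℓ))
  have hρ : σ ^ (orderOf σ / ℓ) = 1 :=
    h ℓ hℓ (Int.natCast_dvd.mpr hℓn) _ (npow_mem_zpowers σ _) hρℓ
  rw [hρ, orderOf_one] at hord
  exact hℓ.one_lt.ne hord

theorem AlgEquiv.apply_sub_algebraMap_sub {K L : Type*} [CommSemiring K] [Ring L] [Algebra K L]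
    (σ : L ≃ₐ[K] L) (x : L) (y : K) :
    σ (x - algebraMap K L y) - (x - algebraMap K L y) = σ x - x := by
  rw [map_sub, AlgEquiv.commutes]
  abel

theorem toLex_zero_one_ne_toLex_mul {N : ℤ} (hN : 2 ≤ N) (A B : ℤ) :
    toLex ((0 : ℤ), (1 : ℤ)) ≠ toLex (A, N * B) := by
  intro h
  have h1 : N * B = 1 := (congrArg (fun x => (ofLex x).2) h).symm
  have := Int.eq_one_of_mul_eq_one_right (by omega) h1
  omega

theorem eq_toLex_zero_one_of_pos_of_lt {x : WithTop (ℤ ×ₗ ℤ)} (h0 : 0 < x)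
    (h2 : x < ((toLex (0, 1) + toLex (0, 1) : ℤ ×ₗ ℤ) : WithTop (ℤ ×ₗ ℤ))) :
    x = ((toLex (0, 1) : ℤ ×ₗ ℤ) : WithTop (ℤ ×ₗ ℤ)) := by
  lift x to ℤ ×ₗ ℤ using h2.ne_top
  rw [← WithTop.coe_zero, WithTop.coe_lt_coe] at h0
  rw [WithTop.coe_lt_coe] at h2
  rw [WithTop.coe_eq_coe]
  obtain ⟨A, B⟩ := x
  change toLex ((0 : ℤ), (0 : ℤ)) < toLex (A, B) at h0
  change toLex (A, B) < toLex ((0 : ℤ), (2 : ℤ)) at h2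
  simp only [Prod.Lex.toLex_lt_toLex] at h0 h2
  obtain ⟨rfl, rfl⟩ : A = 0 ∧ B = 1 := by omega
  rfl

namespace AddValuation

section Monoid

variable {K L R Γ₀ : Type*} [LinearOrderedAddCommMonoidWithTop Γ₀]

theorem map_intCast_nonneg [Ring R] (v : AddValuation R Γ₀) (n : ℤ) : 0 ≤ v (n : R) := by
  induction n using Int.induction_on with
  | zero => simp
  | succ k ih => push_cast at ih ⊢; exact v.map_le_add ih v.map_one.ge
  | pred k ih => push_cast at ih ⊢; exact v.map_le_sub ih v.map_one.ge

theorem not_pos_and_pos_of_coprime [Ring R] (v : AddValuation R Γ₀) {m n : ℕ}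
    (h : m.Coprime n) : ¬ (0 < v (m : R) ∧ 0 < v (n : R)) := by
  rintro ⟨hm, hn⟩
  obtain ⟨u, t, hut⟩ := Nat.isCoprime_iff_coprime.mpr h
  have h1 : (1 : R) = u * m + t * n := by exact_mod_cast congrArg (Int.cast : ℤ → R) hut.symm
  have hpos : 0 < v (1 : R) := by
    rw [h1]
    refine v.map_lt_add ?_ ?_ <;> rw [v.map_mul]
    · exact hm.trans_le (le_add_of_nonneg_left (v.map_intCast_nonneg u))
    · exact hn.trans_le (le_add_of_nonneg_left (v.map_intCast_nonneg t))
  exact hpos.ne' v.map_one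

theorem map_natCast_eq_zero_of_not_dvd_s16 [Ring R] (v : AddValuation R Γ₀) {p : ℕ}
    (hp : p = 0 ∨ p.Prime) (hchar0 : p = 0 → ∀ n : ℕ, 0 < n → v (n : R) = 0)
    (hcharp : 0 < p → 0 < v (p : R)) {m : ℕ} (hm : ¬ p ∣ m) : v (m : R) = 0 := by
  rcases hp with rfl | hp
  · exact hchar0 rfl m (Nat.pos_of_ne_zero (by rintro rfl; exact hm (dvd_refl 0)))
  · have hcop : m.Coprime p := ((Nat.Prime.coprime_iff_not_dvd hp).mpr hm).symm
    refine le_antisymm (not_lt.mp fun hpos => ?_) (by exact_mod_cast v.map_intCast_nonneg m)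
    exact v.not_pos_and_pos_of_coprime hcop ⟨hpos, hcharp hp.pos⟩

theorem le_map_sub_aeval_sub_aeval [CommSemiring K] [CommRing L] [Algebra K L]
    (v : AddValuation L Γ₀) {q : K[X]} (hq : ∀ i, 0 ≤ v (algebraMap K L (q.coeff i)))
    {s t : L} (hs : 0 ≤ v s) (ht : 0 ≤ v t) :
    v (s - t) ≤ v (Polynomial.aeval s q - Polynomial.aeval t q) := by
  have hfactor : Polynomial.aeval s q - Polynomial.aeval t q = (s - t) *
      ∑ i ∈ Finset.range (q.natDegree + 1), algebraMap K L (q.coeff i) *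
        ∑ j ∈ Finset.range i, s ^ j * t ^ (i - 1 - j) := by
    rw [Polynomial.aeval_eq_sum_range, Polynomial.aeval_eq_sum_range, ← Finset.sum_sub_distrib,
      Finset.mul_sum]
    refine Finset.sum_congr rfl fun i _ => ?_
    rw [Algebra.smul_def, Algebra.smul_def, ← mul_sub, ← geom_sum₂_mul]
    ring
  rw [hfactor, v.map_mul]
  refine le_add_of_nonneg_right (v.map_le_sum fun i _ => ?_)
  rw [v.map_mul]
  refine add_nonneg (hq i) (v.map_le_sum fun j _ => ?_)
  rw [v.map_mul, v.map_pow, v.map_pow]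
  exact add_nonneg (nsmul_nonneg hs j) (nsmul_nonneg ht _)

theorem le_map_prod_one_add_sub_one_sub_sum [CommRing R] (v : AddValuation R Γ₀) {ι : Type*}
    (s : Finset ι) {f : ι → R} {g : Γ₀} (hg : 0 ≤ g) (hf : ∀ i ∈ s, g ≤ v (f i)) :
    g + g ≤ v (∏ i ∈ s, (1 + f i) - 1 - ∑ i ∈ s, f i) := by
  induction s using Finset.cons_induction with
  | empty => simp
  | cons j s hj ih =>
    rw [Finset.forall_mem_cons] at hf
    have hexpand : ∏ i ∈ Finset.cons j s hj, (1 + f i) - 1 - ∑ i ∈ Finset.cons j s hj, f i =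
        (∏ i ∈ s, (1 + f i) - 1 - ∑ i ∈ s, f i) * (1 + f j) + (∑ i ∈ s, f i) * f j := by
      rw [Finset.prod_cons, Finset.sum_cons]
      ring
    rw [hexpand]
    refine v.map_le_add ?_ ?_ <;> rw [v.map_mul]
    · exact le_add_of_le_of_nonneg (ih hf.2)
        (v.map_le_add v.map_one.ge (hg.trans hf.1))
    · exact add_le_add (v.map_le_sum hf.2) hf.1

section AlgEquiv

variable [CommSemiring K] [Ring L] [Algebra K L] (v : AddValuation L Γ₀)

theorem map_apply_sub_le_map_pow_apply_sub {σ : L ≃ₐ[K] L} (hσ : ∀ x, v (σ x) = v x)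
    (x : L) (n : ℕ) : v (σ x - x) ≤ v ((σ ^ n) x - x) := by
  induction n with
  | zero => simp
  | succ n ih =>
    have htelescope : (σ ^ (n + 1)) x - x = σ ((σ ^ n) x - x) + (σ x - x) := by
      rw [_root_.map_sub, pow_succ', AlgEquiv.mul_apply]
      abel
    rw [htelescope]
    exact v.map_le_add (by rwa [hσ]) le_rfl

theorem map_apply_sub_le_map_zpow_apply_sub {σ : L ≃ₐ[K] L} (hσ : ∀ x, v (σ x) = v x)
    (x : L) (n : ℤ) : v (σ x - x) ≤ v ((σ ^ n) x - x) := by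
  have hσinv : ∀ y, v (σ⁻¹ y) = v y := fun y => by
    rw [← hσ, ← AlgEquiv.mul_apply, mul_inv_cancel, AlgEquiv.one_apply]
  have hinv : v (σ⁻¹ x - x) = v (σ x - x) := by
    rw [← hσ, _root_.map_sub, ← AlgEquiv.mul_apply, mul_inv_cancel, AlgEquiv.one_apply,
      v.map_sub_swap]
  rcases n with n | n
  · simpa using v.map_apply_sub_le_map_pow_apply_sub hσ x n
  · rw [zpow_negSucc, ← inv_pow, ← hinv]
    exact v.map_apply_sub_le_map_pow_apply_sub hσinv x (n + 1)

theorem map_apply_sub_eq_of_zpowers_eq {σ τ : L ≃ₐ[K] L} (hσ : ∀ x, v (σ x) = v x)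
    (hτ : ∀ x, v (τ x) = v x) (h : Subgroup.zpowers σ = Subgroup.zpowers τ) (x : L) :
    v (σ x - x) = v (τ x - x) := by
  obtain ⟨m, hm⟩ := Subgroup.mem_zpowers_iff.mp (h ▸ Subgroup.mem_zpowers τ)
  obtain ⟨n, hn⟩ := Subgroup.mem_zpowers_iff.mp (h.symm ▸ Subgroup.mem_zpowers σ)
  refine le_antisymm ?_ ?_
  · simpa only [hm] using v.map_apply_sub_le_map_zpow_apply_sub hσ x m
  · simpa only [hn] using v.map_apply_sub_le_map_zpow_apply_sub hτ x n

theorem map_apply_sub_pos {σ : L ≃ₐ[K] L} (hσ : ∀ x, v (σ x) = v x) {x : L} {y : K}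
    (h : 0 < v (x - algebraMap K L y)) : 0 < v (σ x - x) := by
  rw [← σ.apply_sub_algebraMap_sub x y]
  exact (lt_min (by rwa [hσ]) h).trans_le (v.map_sub _ _)

end AlgEquiv

section Generator

variable [CommSemiring K] [CommRing L] [Algebra K L] (v : AddValuation L Γ₀) {a : L}

theorem isLeast_map_apply_sub (ha : 0 ≤ v a)
    (hgen : ∀ x : L, 0 ≤ v x → ∃ q : K[X],
      (∀ i, 0 ≤ v (algebraMap K L (q.coeff i))) ∧ x = Polynomial.aeval a q)
    {σ : L ≃ₐ[K] L} (hσ : ∀ x, v (σ x) = v x) :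
    IsLeast {g | ∃ x, 0 ≤ v x ∧ v (σ x - x) = g} (v (σ a - a)) := by
  refine ⟨⟨a, ha, rfl⟩, ?_⟩
  rintro _ ⟨x, hx, rfl⟩
  obtain ⟨q, hq, rfl⟩ := hgen x hx
  rw [← Polynomial.aeval_algHom_apply σ a q]
  exact v.le_map_sub_aeval_sub_aeval hq (by simpa using (hσ a).ge.trans' ha) ha

theorem map_sub_algebraMap_le_of_forall_ne (ha : 0 ≤ v a)
    (hgen : ∀ x : L, 0 ≤ v x → ∃ q : K[X],
      (∀ i, 0 ≤ v (algebraMap K L (q.coeff i))) ∧ x = Polynomial.aeval a q)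
    {y : K} (hy : 0 ≤ v (algebraMap K L y)) {z : L} (hz : 0 ≤ v z)
    (hzK : ∀ x : K, v (algebraMap K L x) ≠ v z) : v (a - algebraMap K L y) ≤ v z := by
  by_contra! h
  obtain ⟨q, hq, rfl⟩ := hgen z hz
  have hclose : v (Polynomial.aeval a q) <
      v (Polynomial.aeval (algebraMap K L y) q - Polynomial.aeval a q) := by
    rw [v.map_sub_swap]
    exact h.trans_le (v.le_map_sub_aeval_sub_aeval hq ha hy)
  refine hzK (Polynomial.aeval y q) ?_
  rw [← Polynomial.aeval_algebraMap_apply]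
  exact v.map_eq_of_lt_sub hclose

end Generator

end Monoid

theorem _root_.AlgEquiv.eq_one_of_apply_eq {K L Γ₀ : Type*} [CommSemiring K] [Field L]
    [Algebra K L] [LinearOrderedAddCommGroupWithTop Γ₀] (v : AddValuation L Γ₀) {a : L}
    (hgen : ∀ x : L, 0 ≤ v x → ∃ q : K[X],
      (∀ i, 0 ≤ v (algebraMap K L (q.coeff i))) ∧ x = Polynomial.aeval a q)
    {σ : L ≃ₐ[K] L} (hσa : σ a = a) : σ = 1 := by
  have hint : ∀ x, 0 ≤ v x → σ x = x := by
    intro x hx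
    obtain ⟨q, -, rfl⟩ := hgen x hx
    rw [← Polynomial.aeval_algHom_apply σ a q]
    exact congrArg (Polynomial.aeval · q) hσa
  ext x
  rcases le_or_gt 0 (v x) with hx | hx
  · exact hint x hx
  · have hinv : 0 ≤ v x⁻¹ := by
      rw [v.map_inv]
      exact (LinearOrderedAddCommGroupWithTop.neg_pos.mpr (Or.inl hx)).le
    simpa using hint x⁻¹ hinv

section WithTop

variable {K L Γ : Type*} [AddCommGroup Γ] [LinearOrder Γ] [IsOrderedAddMonoid Γ]
  [CommSemiring K] [Field L] [Algebra K L] (v : AddValuation L (WithTop Γ))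

/-- With `β = (ρ c - c) / c`, the product of the conjugates `1 + ρᵏ β` telescopes to
`ρ^ℓ c / c = 1`, so `∑ ρᵏ β` has value at least `2 v(β)`; as each `ρᵏ β - β` has value
above `v(β)`, the sum is also `ℓ β` up to terms of value above `v(β)`, forcing `v(ℓ) > 0`. -/
theorem natCast_pos_of_pow_eq_one {ρ : L ≃ₐ[K] L} (hρ : ∀ x, v (ρ x) = v x) {ℓ : ℕ}
    (hρℓ : ρ ^ ℓ = 1) {c : L} (hc : 0 < v c) (hcρ : v c < v (ρ c - c)) (hρc : ρ c ≠ c)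
    (hmin : ∀ x, 0 ≤ v x → v (ρ c - c) ≤ v (ρ x - x)) : 0 < v (ℓ : L) := by
  have hc0 : c ≠ 0 := v.ne_top_iff.mp hcρ.ne_top
  set β := (ρ c - c) / c with hβ
  have hvβ : v β + v c = v (ρ c - c) := by rw [← v.map_mul, div_mul_cancel₀ _ hc0]
  have hβtop : v β ≠ ⊤ := v.ne_top_iff.mpr (div_ne_zero (sub_ne_zero.mpr hρc) hc0)
  have hβpos : 0 < v β := by
    have h : 0 + v c < v β + v c := by rwa [zero_add, hvβ]
    exact (WithTop.add_lt_add_iff_right hcρ.ne_top).mp h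
  have hρpow : ∀ (k : ℕ) (x : L), v ((ρ ^ k) x) = v x := by
    intro k
    induction k with
    | zero => simp
    | succ k ih => intro x; rw [pow_succ, AlgEquiv.mul_apply, ih, hρ]
  have htelescope : ∀ m : ℕ, ∏ k ∈ Finset.range m, (1 + (ρ ^ k) β) = (ρ ^ m) c / c := by
    intro m
    induction m with
    | zero => simp [hc0]
    | succ m ih =>
      have hm0 : (ρ ^ m) c ≠ 0 := (map_ne_zero _).mpr hc0
      rw [Finset.prod_range_succ, ih, hβ, map_div₀, _root_.map_sub, pow_succ, AlgEquiv.mul_apply]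
      field_simp
      ring
  have hsum : v β + v β ≤ v (∑ k ∈ Finset.range ℓ, (ρ ^ k) β) := by
    have := v.le_map_prod_one_add_sub_one_sub_sum (Finset.range ℓ) hβpos.le
      fun k _ => (hρpow k β).ge
    rwa [htelescope, hρℓ, AlgEquiv.one_apply, div_self hc0, sub_self, zero_sub,
      v.map_neg] at this
  have hdiff : v (ρ c - c) ≤ v (∑ k ∈ Finset.range ℓ, ((ρ ^ k) β - β)) :=
    v.map_le_sum fun k _ =>
      (hmin β hβpos.le).trans (v.map_apply_sub_le_map_pow_apply_sub hρ β k)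
  have hℓβ : (ℓ : L) * β =
      ∑ k ∈ Finset.range ℓ, (ρ ^ k) β - ∑ k ∈ Finset.range ℓ, ((ρ ^ k) β - β) := by
    simp [Finset.sum_sub_distrib]
  have hlt_sum : v β < v (∑ k ∈ Finset.range ℓ, (ρ ^ k) β) :=
    calc v β = v β + 0 := (add_zero _).symm
      _ < v β + v β := (WithTop.add_lt_add_iff_left hβtop).mpr hβpos
      _ ≤ _ := hsum
  have hlt_diff : v β < v (∑ k ∈ Finset.range ℓ, ((ρ ^ k) β - β)) :=
    calc v β = v β + 0 := (add_zero _).symm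
      _ < v β + v c := (WithTop.add_lt_add_iff_left hβtop).mpr hc
      _ ≤ _ := hvβ ▸ hdiff
  have hlt : v β < v ((ℓ : L) * β) := by
    rw [hℓβ]
    exact (lt_min hlt_sum hlt_diff).trans_le (v.map_sub _ _)
  have h : 0 + v β < v (ℓ : L) + v β := by rwa [zero_add, ← v.map_mul]
  exact (WithTop.add_lt_add_iff_right hβtop).mp h

theorem natCast_pos_of_pow_eq_one_of_lt {a : L} (ha : 0 ≤ v a)
    (hgen : ∀ x : L, 0 ≤ v x → ∃ q : K[X],
      (∀ i, 0 ≤ v (algebraMap K L (q.coeff i))) ∧ x = Polynomial.aeval a q)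
    {y : K} (hy : 0 ≤ v (algebraMap K L y)) (hay : 0 < v (a - algebraMap K L y))
    {z : L} (hz : 0 ≤ v z) (hzK : ∀ x : K, v (algebraMap K L x) ≠ v z)
    {ρ : L ≃ₐ[K] L} (hρ : ∀ x, v (ρ x) = v x) (hρ1 : ρ ≠ 1) {ℓ : ℕ} (hρℓ : ρ ^ ℓ = 1)
    (hzρ : v z < v (ρ a - a)) : 0 < v (ℓ : L) := by
  have hc := ρ.apply_sub_algebraMap_sub a y
  refine v.natCast_pos_of_pow_eq_one hρ hρℓ hay ?_ ?_ fun x hx => ?_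
  · rw [hc]
    exact (v.map_sub_algebraMap_le_of_forall_ne ha hgen hy hz hzK).trans_lt hzρ
  · rw [← sub_ne_zero, hc, sub_ne_zero]
    exact fun h => hρ1 (AlgEquiv.eq_one_of_apply_eq v hgen h)
  · rw [hc]
    exact (v.isLeast_map_apply_sub ha hgen hρ).2 ⟨x, hx, rfl⟩

end WithTop

end AddValuation

theorem iG_values_of_ramification_filtration_general
    (K L : Type) [Field K] [Field L] [Algebra K L] [FiniteDimensional K L]
    (w : AddValuation L (WithTop (ℤ ×ₗ ℤ)))
    (hsurj : ∀ γ : ℤ ×ₗ ℤ, ∃ x : L, w x = (γ : WithTop (ℤ ×ₗ ℤ)))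
    (hinvar : ∀ (σ : L ≃ₐ[K] L) (x : L), w (σ x) = w x)
    (hK : ∀ (x : K) (γ : ℤ ×ₗ ℤ), w (algebraMap K L x) = (γ : WithTop (ℤ ×ₗ ℤ)) →
      ∃ a b : ℤ, γ = toLex (a, (Nat.card (L ≃ₐ[K] L) : ℤ) * b))
    (hres : ∀ x : L, 0 ≤ w x → ∃ y : K, 0 ≤ w (algebraMap K L y) ∧
      0 < w (x - algebraMap K L y))
    (a : L) (ha : 0 ≤ w a)
    (hmono : ∀ x : L, 0 ≤ w x → ∃ q : K[X],
      (∀ i, 0 ≤ w (algebraMap K L (q.coeff i))) ∧ x = Polynomial.aeval a q)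
    (iG : (L ≃ₐ[K] L) → WithTop (ℤ ×ₗ ℤ)) (h1 : iG 1 = ⊤)
    (hiG : ∀ σ : L ≃ₐ[K] L, σ ≠ 1 →
      (∃ x : L, 0 ≤ w x ∧ w (σ x - x) = iG σ) ∧
      (∀ x : L, 0 ≤ w x → iG σ ≤ w (σ x - x)))
    -- the residue characteristic `p`, either `0` or a prime
    (p : ℕ) (hp : p = 0 ∨ p.Prime)
    (hchar0 : p = 0 → ∀ n : ℕ, 0 < n → w ((n : ℕ) : L) = 0)
    (hcharp : 0 < p → 0 < w ((p : ℕ) : L)) :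
    -- `σ ∉ G_{ε_L}` (and `σ ≠ 1`) implies `i_G(σ) = ε_L`
    (∀ σ : L ≃ₐ[K] L, σ ≠ 1 →
      ¬ (((toLex (0, 1) + toLex (0, 1) : ℤ ×ₗ ℤ) : WithTop (ℤ ×ₗ ℤ)) ≤ iG σ) →
      iG σ = ((toLex (0, 1) : ℤ ×ₗ ℤ) : WithTop (ℤ ×ₗ ℤ))) ∧
    -- for `σ ∈ G_{ε_L}` and `n` prime to the residue characteristic, `i_G(σ^n) = i_G(σ)`
    (∀ σ : L ≃ₐ[K] L,
      ((toLex (0, 1) + toLex (0, 1) : ℤ ×ₗ ℤ) : WithTop (ℤ ×ₗ ℤ)) ≤ iG σ →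
      ∀ n : ℤ, ¬ ((p : ℤ) ∣ n) → iG (σ ^ n) = iG σ) ∧
    -- if `σ` and `τ` generate the same cyclic subgroup then `i_G(σ) = i_G(τ)`
    (∀ σ τ : L ≃ₐ[K] L, Subgroup.zpowers σ = Subgroup.zpowers τ → iG σ = iG τ) := by
  obtain rfl : iG = fun σ => w (σ a - a) := funext fun σ => by
    by_cases hσ : σ = 1
    · simp [hσ, h1]
    · obtain ⟨hex, hle⟩ := hiG σ hσ
      refine IsLeast.unique ⟨hex, ?_⟩ (w.isLeast_map_apply_sub ha hmono (hinvar σ))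
      rintro _ ⟨x, hx, rfl⟩
      exact hle x hx
  obtain ⟨y, hy, hay⟩ := hres a ha
  obtain ⟨z, hz⟩ := hsurj (toLex (0, 1))
  have hzK (ρ : L ≃ₐ[K] L) (hρ : ρ ≠ 1) (x : K) : w (algebraMap K L x) ≠ w z := fun hx => by
    have hcard : 1 < Nat.card (L ≃ₐ[K] L) :=
      Finite.one_lt_card_iff_nontrivial.mpr (nontrivial_of_ne ρ 1 hρ)
    obtain ⟨A, B, hAB⟩ := hK x _ (hx.trans hz)
    exact toLex_zero_one_ne_toLex_mul (by omega) A B hAB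
  have hcore (ρ : L ≃ₐ[K] L) (hρ : ρ ≠ 1) (ℓ : ℕ) (hρℓ : ρ ^ ℓ = 1)
      (hρε : ((toLex (0, 1) + toLex (0, 1) : ℤ ×ₗ ℤ) : WithTop (ℤ ×ₗ ℤ)) ≤ w (ρ a - a)) :
      0 < w (ℓ : L) :=
    w.natCast_pos_of_pow_eq_one_of_lt ha hmono hy hay (hz ▸ by decide) (hzK ρ hρ) (hinvar ρ) hρ
      hρℓ (hz ▸ (WithTop.coe_lt_coe.mpr (by decide)).trans_le hρε)
  refine ⟨fun σ _ hσ => eq_toLex_zero_one_of_pos_of_lt (w.map_apply_sub_pos (hinvar σ) hay)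
    (not_le.mp hσ), fun σ hσ n hn => ?_,
    fun σ τ h => w.map_apply_sub_eq_of_zpowers_eq (hinvar σ) (hinvar τ) h a⟩
  refine w.map_apply_sub_eq_of_zpowers_eq (hinvar _) (hinvar σ)
    (Subgroup.zpowers_zpow_eq_of_forall_pow_prime_eq_one (isOfFinOrder_of_finite σ)
      fun ℓ _ hℓn ρ hρσ hρℓ => by_contra fun hρ => ?_) a
  obtain ⟨k, rfl⟩ := Subgroup.mem_zpowers_iff.mp hρσ
  have hpos := hcore _ hρ ℓ hρℓ (hσ.trans (w.map_apply_sub_le_map_zpow_apply_sub (hinvar σ) a k))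
  exact hpos.ne' (w.map_natCast_eq_zero_of_not_dvd_s16 hp hchar0 hcharp
    fun hpℓ => hn ((Int.natCast_dvd_natCast.mpr hpℓ).trans hℓn))

/-- In the ramification theory of a monogenic integral extension `W/V`
of henselian `ℤ²`-valuation rings with Galois group `G` and residue characteristic
`p ≥ 0`: every `σ ∈ G − G_{ε_L}` has `i_G(σ) = ε_L`; for every `σ ∈ G_{ε_L}` and every
integer `n ≠ 0` prime to the residue characteristic, `i_G(σ^n) = i_G(σ)`; consequently
`i_G(σ) = i_G(τ)` whenever `σ` and `τ` generate the same cyclic subgroup of `G`.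
(Here `ε_L = (0,1)` is the minimal positive element of `Γ_W = ℤ ×ₗ ℤ`, and
`σ ∈ G_{ε_L}` means `i_G(σ) ≥ 2·ε_L`.) -/
theorem iG_values_of_ramification_filtration
    (K L : Type) [Field K] [Field L] [Algebra K L] [FiniteDimensional K L] [IsGalois K L]
    (w : AddValuation L (WithTop (ℤ ×ₗ ℤ)))
    (hsurj : ∀ γ : ℤ ×ₗ ℤ, ∃ x : L, w x = (γ : WithTop (ℤ ×ₗ ℤ)))
    (hinvar : ∀ (σ : L ≃ₐ[K] L) (x : L), w (σ x) = w x)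
    (hK : ∀ (x : K) (γ : ℤ ×ₗ ℤ), w (algebraMap K L x) = (γ : WithTop (ℤ ×ₗ ℤ)) →
      ∃ a b : ℤ, γ = toLex (a, (Nat.card (L ≃ₐ[K] L) : ℤ) * b))
    (hres : ∀ x : L, 0 ≤ w x → ∃ y : K, 0 ≤ w (algebraMap K L y) ∧
      0 < w (x - algebraMap K L y))
    (VK : Subring K) (hVK : ∀ x : K, x ∈ VK ↔ 0 ≤ w (algebraMap K L x))
    [HenselianLocalRing VK]
    (a : L) (ha : 0 ≤ w a)
    (hmono : ∀ x : L, 0 ≤ w x → ∃ q : K[X],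
      (∀ i, 0 ≤ w (algebraMap K L (q.coeff i))) ∧ x = Polynomial.aeval a q)
    (iG : (L ≃ₐ[K] L) → WithTop (ℤ ×ₗ ℤ)) (h1 : iG 1 = ⊤)
    (hiG : ∀ σ : L ≃ₐ[K] L, σ ≠ 1 →
      (∃ x : L, 0 ≤ w x ∧ w (σ x - x) = iG σ) ∧
      (∀ x : L, 0 ≤ w x → iG σ ≤ w (σ x - x)))
    -- the residue characteristic `p`, either `0` or a prime
    (p : ℕ) (hp : p = 0 ∨ p.Prime)
    (hchar0 : p = 0 → ∀ n : ℕ, 0 < n → w ((n : ℕ) : L) = 0)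
    (hcharp : 0 < p → 0 < w ((p : ℕ) : L)) :
    -- `σ ∉ G_{ε_L}` (and `σ ≠ 1`) implies `i_G(σ) = ε_L`
    (∀ σ : L ≃ₐ[K] L, σ ≠ 1 →
      ¬ (((toLex (0, 1) + toLex (0, 1) : ℤ ×ₗ ℤ) : WithTop (ℤ ×ₗ ℤ)) ≤ iG σ) →
      iG σ = ((toLex (0, 1) : ℤ ×ₗ ℤ) : WithTop (ℤ ×ₗ ℤ))) ∧
    -- for `σ ∈ G_{ε_L}` and `n` prime to the residue characteristic, `i_G(σ^n) = i_G(σ)`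
    (∀ σ : L ≃ₐ[K] L,
      ((toLex (0, 1) + toLex (0, 1) : ℤ ×ₗ ℤ) : WithTop (ℤ ×ₗ ℤ)) ≤ iG σ →
      ∀ n : ℤ, ¬ ((p : ℤ) ∣ n) → iG (σ ^ n) = iG σ) ∧
    -- if `σ` and `τ` generate the same cyclic subgroup then `i_G(σ) = i_G(τ)`
    (∀ σ τ : L ≃ₐ[K] L, Subgroup.zpowers σ = Subgroup.zpowers τ → iG σ = iG τ) :=
  iG_values_of_ramification_filtration_general K L w hsurj hinvar hK hres a ha hmono iG h1 hiG p hp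
    hchar0 hcharp
end

section
/- Let V ⊆ W be a monogenic integral extension of henselian ℤ²-valuation rings with L/K Galois of group G, let H ≤ G, K' = L^H, and V' the integral closure of V in K'. Then for every τ ∈ G/H with τ ≠ 1, the minimum i_{G/H}(τ) of {v(τ(y) − y) : y ∈ V'} exists and equals Σ_{σ ↦ τ} i_G(σ), the sum over all σ ∈ G mapping to τ. -/
/-!
Let `F = ∏_{h ∈ H} (X - h a)`; its coefficients are integral and fixed by `H`, and for `σ₀ ∉ H`
the valuation of `F(σ₀⁻¹ a) = ∏_h (σ₀⁻¹ a - h a)` is `∑_{σ ∈ σ₀H} i_G(σ)`, because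
`i_G(σ) = v(σ a - a)` when `a` generates the integers. If `y` is integral and `H`-fixed, write
`y = g(a)`; the polynomial `g - y` vanishes at every `h a`, so `g - y = F Q` with `Q` integral
(division by a monic polynomial), and evaluating at `σ₀⁻¹ a` gives `v(σ₀ y - y) ≥ v(F(σ₀⁻¹ a))`.
Conversely `F(σ₀⁻¹ a) = ∑_i (c_i - σ₀⁻¹ c_i) (σ₀⁻¹ a)^i` since `F(a) = 0`, so some coefficient
`c_i` of `F` attains the bound.
-/

open Polynomial

namespace Polynomial

theorem exists_mem_lifts_eq_mul_of_monic_dvd {R S : Type*} [CommRing R] [CommRing S]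
    [Nontrivial S] {f : R →+* S} (hf : Function.Injective f) {F p : S[X]} (hF : F ∈ lifts f)
    (hFm : F.Monic) (hp : p ∈ lifts f) (hdvd : F ∣ p) : ∃ Q ∈ lifts f, p = F * Q := by
  obtain ⟨F', rfl, -, hF'⟩ := lifts_and_degree_eq_and_monic hF hFm
  obtain ⟨p', rfl⟩ := (mem_lifts p).mp hp
  obtain ⟨Q', rfl⟩ := (map_dvd_map f hf hF').mp hdvd
  exact ⟨Q'.map f, (mem_lifts _).mpr ⟨Q', rfl⟩, Polynomial.map_mul f⟩

section prodXSubSMulGroup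

variable (G : Type*) [Group G] [Fintype G] {R : Type*} [CommRing R] [MulSemiringAction G R]

/-- Unlike `prodXSubSMul`, the product runs over the whole group, not over the orbit. -/
noncomputable def prodXSubSMulGroup (x : R) : R[X] := ∏ g : G, (X - C (g • x))

theorem prodXSubSMulGroup_monic (x : R) : (prodXSubSMulGroup G x).Monic :=
  monic_prod_of_monic _ _ fun _ _ => monic_X_sub_C _

theorem eval_prodXSubSMulGroup (x y : R) :
    (prodXSubSMulGroup G x).eval y = ∏ g : G, (y - g • x) := by
  simp [prodXSubSMulGroup, eval_prod]

theorem eval_self_prodXSubSMulGroup (x : R) : (prodXSubSMulGroup G x).eval x = 0 := by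
  rw [eval_prodXSubSMulGroup]
  exact Finset.prod_eq_zero (Finset.mem_univ 1) (by simp)

theorem smul_prodXSubSMulGroup (x : R) (g : G) :
    g • prodXSubSMulGroup G x = prodXSubSMulGroup G x :=
  Finset.smul_prod'.trans <| Fintype.prod_bijective _ (MulAction.bijective g) _ _ fun h => by
    rw [smul_sub, smul_X, smul_C, smul_smul, smul_eq_mul]

theorem smul_coeff_prodXSubSMulGroup (x : R) (g : G) (n : ℕ) :
    g • (prodXSubSMulGroup G x).coeff n = (prodXSubSMulGroup G x).coeff n := by
  rw [← coeff_smul, smul_prodXSubSMulGroup]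

theorem prodXSubSMulGroup_dvd {F : Type*} [Field F] [MulSemiringAction G F] {x : F}
    (hx : Function.Injective (· • x : G → F)) {p : F[X]} (hp : ∀ g : G, p.eval (g • x) = 0) :
    prodXSubSMulGroup G x ∣ p :=
  Fintype.prod_dvd_of_coprime (pairwise_coprime_X_sub_C hx) fun g => dvd_iff_isRoot.mpr (hp g)

end prodXSubSMulGroup

end Polynomial

theorem Finset.sum_filter_inv_mul_mem {G M : Type*} [Group G] [Fintype G] [AddCommMonoid M]
    (H : Subgroup G) [DecidablePred (· ∈ H)] (g : G) (f : G → M) :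
    ∑ σ ∈ univ.filter (fun σ : G => g⁻¹ * σ ∈ H), f σ = ∑ h : H, f (g * h) := by
  symm
  refine Finset.sum_bij (fun h _ => g * h) ?_ ?_ ?_ ?_
  · simp
  · simp
  · intro σ hσ
    exact ⟨⟨g⁻¹ * σ, (Finset.mem_filter.mp hσ).2⟩, Finset.mem_univ _, by simp⟩
  · simp

namespace AddValuation

section CommRing

variable {R : Type*} [CommRing R] {Γ₀ : Type*} [LinearOrderedAddCommMonoidWithTop Γ₀]
  (v : AddValuation R Γ₀)

def integer : Subring R where
  carrier := {x | 0 ≤ v x}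
  one_mem' := by simp
  zero_mem' := by simp
  mul_mem' {x y} hx hy := by simpa using add_nonneg hx hy
  add_mem' hx hy := v.map_le_add hx hy
  neg_mem' := by simp

theorem mem_integer_iff {x : R} : x ∈ v.integer ↔ 0 ≤ v x := Iff.rfl

theorem map_le_map_of_dvd {c d : v.integer} (h : c ∣ d) : v c ≤ v d := by
  obtain ⟨e, rfl⟩ := h
  simpa using le_add_of_nonneg_right e.2

theorem map_prod {ι : Type*} (s : Finset ι) (f : ι → R) :
    v (∏ i ∈ s, f i) = ∑ i ∈ s, v (f i) := by
  classical
  induction s using Finset.induction with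
  | empty => simp
  | insert i s hi ih => rw [Finset.prod_insert hi, Finset.sum_insert hi, v.map_mul, ih]

theorem mem_lifts_integer_iff {p : R[X]} :
    p ∈ lifts v.integer.subtype ↔ ∀ n, 0 ≤ v (p.coeff n) := by
  simp [lifts_iff_coeff_lifts, mem_integer_iff]

theorem eval_map_integer_subtype (q : v.integer[X]) {x : R} (hx : 0 ≤ v x) :
    (q.map v.integer.subtype).eval x = q.eval ⟨x, hx⟩ :=
  eval_map_apply (p := q) (f := v.integer.subtype) ⟨x, hx⟩

theorem map_eval_nonneg {p : R[X]} (hp : p ∈ lifts v.integer.subtype) {x : R} (hx : 0 ≤ v x) :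
    0 ≤ v (p.eval x) := by
  obtain ⟨q, rfl⟩ := (mem_lifts _).mp hp
  rw [v.eval_map_integer_subtype q hx]
  exact (q.eval _).2

theorem map_sub_le_map_eval_sub {p : R[X]} (hp : p ∈ lifts v.integer.subtype) {x y : R}
    (hx : 0 ≤ v x) (hy : 0 ≤ v y) : v (x - y) ≤ v (p.eval x - p.eval y) := by
  obtain ⟨q, rfl⟩ := (mem_lifts _).mp hp
  rw [v.eval_map_integer_subtype q hx, v.eval_map_integer_subtype q hy]
  simpa using v.map_le_map_of_dvd (sub_dvd_eval_sub (⟨x, hx⟩ : v.integer) ⟨y, hy⟩ q)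

theorem exists_map_coeff_le_map_eval (p : R[X]) {x : R} (hx : 0 ≤ v x)
    (hp : v (p.eval x) ≠ ⊤) : ∃ n, v (p.coeff n) ≤ v (p.eval x) := by
  by_contra! h
  refine (v.map_lt_sum hp fun n _ => ?_).ne (congrArg v (p.eval_eq_sum_range x))
  exact (h n).trans_le (by simpa using le_add_of_nonneg_right (nsmul_nonneg hx n))

theorem prodXSubSMulGroup_mem_lifts_integer {G : Type*} [Group G] [Fintype G]
    [MulSemiringAction G R] {x : R} (hx : ∀ g : G, 0 ≤ v (g • x)) :
    prodXSubSMulGroup G x ∈ lifts v.integer.subtype := by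
  rw [lifts_iff_liftsRing]
  refine Subring.prod_mem _ fun g _ => sub_mem ?_ ?_
  · exact (lifts_iff_liftsRing _ _).mp (X_mem_lifts _)
  · exact (lifts_iff_liftsRing _ _).mp (C'_mem_lifts ⟨⟨g • x, hx g⟩, rfl⟩)

end CommRing

variable {K L : Type*} [Field K] [Field L] [Algebra K L] {Γ₀ : Type*}
  [LinearOrderedAddCommMonoidWithTop Γ₀]

theorem nonneg_or_inv_nonneg (v : AddValuation L Γ₀) (x : L) : 0 ≤ v x ∨ 0 ≤ v x⁻¹ := by
  by_contra! h
  rcases eq_or_ne x 0 with rfl | hx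
  · simp at h
  have hlt : v x + v x⁻¹ < 0 := calc
    v x + v x⁻¹ ≤ v x + 0 := by gcongr; exact h.2.le
    _ < 0 := by simpa using h.1
  exact hlt.ne (by rw [← v.map_mul, mul_inv_cancel₀ hx, v.map_one])

variable {v : AddValuation L Γ₀}

theorem map_eval_prodXSubSMulGroup (hinv : ∀ (σ : L ≃ₐ[K] L) x, v (σ x) = v x)
    (H : Subgroup (L ≃ₐ[K] L)) [Fintype H] (a : L) (σ : L ≃ₐ[K] L) :
    v ((prodXSubSMulGroup H a).eval (σ⁻¹ a)) = ∑ h : H, v ((σ * h) a - a) := by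
  rw [eval_prodXSubSMulGroup, v.map_prod]
  refine Finset.sum_congr rfl fun h _ => ?_
  rw [← hinv σ, _root_.map_sub, v.map_sub_swap]
  simp [AlgEquiv.mul_apply, Subgroup.smul_def, AlgEquiv.smul_def]

/-- `a` generates the integers of `L` over those of `K`: the paper's `W = V[a]`. -/
structure GeneratesIntegers (K : Type*) [Field K] [Algebra K L] (v : AddValuation L Γ₀) (a : L) :
    Prop where
  nonneg : 0 ≤ v a
  exists_eq_aeval : ∀ x, 0 ≤ v x →
    ∃ q : K[X], (∀ i, 0 ≤ v (algebraMap K L (q.coeff i))) ∧ x = aeval a q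

namespace GeneratesIntegers

variable {a : L}

theorem exists_eq_eval_of_nonneg (hgen : v.GeneratesIntegers K a) {x : L} (hx : 0 ≤ v x) :
    ∃ p ∈ lifts v.integer.subtype, ∀ σ : L ≃ₐ[K] L, σ x = p.eval (σ a) := by
  obtain ⟨q, hq, rfl⟩ := hgen.exists_eq_aeval x hx
  refine ⟨q.map (algebraMap K L), v.mem_lifts_integer_iff.mpr fun n => ?_, fun σ => ?_⟩
  · simpa using hq n
  · rw [eval_map_algebraMap, aeval_algEquiv, AlgHom.comp_apply]
    rfl

theorem apply_eq_self_of_nonneg (hgen : v.GeneratesIntegers K a) {σ : L ≃ₐ[K] L}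
    (hσ : σ a = a) {x : L} (hx : 0 ≤ v x) : σ x = x := by
  obtain ⟨p, -, hp⟩ := hgen.exists_eq_eval_of_nonneg hx
  rw [hp σ, hσ, ← AlgEquiv.one_apply (R := K) a, ← hp 1, AlgEquiv.one_apply]

theorem eq_one_of_apply_eq_self (hgen : v.GeneratesIntegers K a) {σ : L ≃ₐ[K] L}
    (hσ : σ a = a) : σ = 1 := by
  ext x
  rcases v.nonneg_or_inv_nonneg x with hx | hx
  · exact hgen.apply_eq_self_of_nonneg hσ hx
  · simpa using hgen.apply_eq_self_of_nonneg hσ hx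

theorem injective_apply (hgen : v.GeneratesIntegers K a) :
    Function.Injective fun σ : L ≃ₐ[K] L => σ a := by
  intro σ τ h
  refine (inv_mul_eq_one.mp (hgen.eq_one_of_apply_eq_self ?_)).symm
  simp [AlgEquiv.mul_apply, h]

theorem map_sub_le_map_sub (hgen : v.GeneratesIntegers K a)
    (hinv : ∀ (σ : L ≃ₐ[K] L) x, v (σ x) = v x) (σ : L ≃ₐ[K] L) {x : L} (hx : 0 ≤ v x) :
    v (σ a - a) ≤ v (σ x - x) := by
  obtain ⟨p, hp, hpx⟩ := hgen.exists_eq_eval_of_nonneg hx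
  rw [hpx σ, ← AlgEquiv.one_apply (R := K) x, hpx 1, AlgEquiv.one_apply]
  exact v.map_sub_le_map_eval_sub hp ((hinv σ a).symm ▸ hgen.nonneg) hgen.nonneg

theorem le_map_sub_of_mem_fixedField (hgen : v.GeneratesIntegers K a)
    (hinv : ∀ (σ : L ≃ₐ[K] L) x, v (σ x) = v x) (H : Subgroup (L ≃ₐ[K] L)) [Fintype H]
    (σ : L ≃ₐ[K] L) {y : L} (hy : y ∈ IntermediateField.fixedField H) (hy0 : 0 ≤ v y) :
    v ((prodXSubSMulGroup H a).eval (σ⁻¹ a)) ≤ v (σ y - y) := by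
  obtain ⟨p, hp, hpy⟩ := hgen.exists_eq_eval_of_nonneg hy0
  have hroots (h : H) : (p - C y).eval (h • a) = 0 := by
    rw [eval_sub, eval_C, Subgroup.smul_def, AlgEquiv.smul_def, ← hpy, sub_eq_zero]
    exact hy h
  have hdvd : prodXSubSMulGroup H a ∣ p - C y :=
    prodXSubSMulGroup_dvd H (hgen.injective_apply.comp Subtype.val_injective) hroots
  have hF := v.prodXSubSMulGroup_mem_lifts_integer (G := H) fun h => (hinv h a).symm ▸ hgen.nonneg
  have hpy' : p - C y ∈ lifts v.integer.subtype := by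
    rw [lifts_iff_liftsRing] at hp ⊢
    exact sub_mem hp ((lifts_iff_liftsRing _ _).mp (C'_mem_lifts ⟨⟨y, hy0⟩, rfl⟩))
  obtain ⟨Q, hQ, hpQ⟩ := exists_mem_lifts_eq_mul_of_monic_dvd Subtype.val_injective hF
    (prodXSubSMulGroup_monic H a) hpy' hdvd
  have hb : 0 ≤ v (σ⁻¹ a) := (hinv _ a).symm ▸ hgen.nonneg
  calc v ((prodXSubSMulGroup H a).eval (σ⁻¹ a))
      ≤ v ((prodXSubSMulGroup H a).eval (σ⁻¹ a)) + v (Q.eval (σ⁻¹ a)) :=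
        le_add_of_nonneg_right (v.map_eval_nonneg hQ hb)
    _ = v (σ⁻¹ y - y) := by rw [← v.map_mul, ← eval_mul, ← hpQ, eval_sub, eval_C, hpy]
    _ = v (σ y - y) := by
        rw [← hinv σ, _root_.map_sub, v.map_sub_swap, ← AlgEquiv.mul_apply, mul_inv_cancel,
          AlgEquiv.one_apply]

theorem exists_mem_fixedField_map_sub_le [Nontrivial Γ₀] (hgen : v.GeneratesIntegers K a)
    (hinv : ∀ (σ : L ≃ₐ[K] L) x, v (σ x) = v x) (H : Subgroup (L ≃ₐ[K] L)) [Fintype H]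
    {σ : L ≃ₐ[K] L} (hσ : σ ∉ H) :
    ∃ c ∈ IntermediateField.fixedField H, 0 ≤ v c ∧
      v (σ c - c) ≤ v ((prodXSubSMulGroup H a).eval (σ⁻¹ a)) := by
  set F := prodXSubSMulGroup H a
  have hF := v.prodXSubSMulGroup_mem_lifts_integer (G := H) fun h => (hinv h a).symm ▸ hgen.nonneg
  have hb : 0 ≤ v (σ⁻¹ a) := (hinv _ a).symm ▸ hgen.nonneg
  -- `σ⁻¹ • F` vanishes at `σ⁻¹ a`, so only the differences `c - σ⁻¹ c` of coefficients remain.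
  have hD : (F - σ⁻¹ • F).eval (σ⁻¹ a) = F.eval (σ⁻¹ a) := by
    rw [eval_sub, ← AlgEquiv.smul_def, smul_eval_smul, eval_self_prodXSubSMulGroup, smul_zero,
      sub_zero]
  have hne : v (F.eval (σ⁻¹ a)) ≠ ⊤ := by
    rw [v.ne_top_iff, eval_prodXSubSMulGroup]
    refine Finset.prod_ne_zero_iff.mpr fun h _ => sub_ne_zero.mpr fun he => hσ ?_
    have : σ⁻¹ = h := hgen.injective_apply he
    simpa [← this] using h.2
  obtain ⟨n, hn⟩ := v.exists_map_coeff_le_map_eval _ hb (hD ▸ hne)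
  refine ⟨F.coeff n, fun g => smul_coeff_prodXSubSMulGroup H a g n,
    v.mem_lifts_integer_iff.mp hF n, ?_⟩
  rw [coeff_sub, coeff_smul, hD] at hn
  calc v (σ (F.coeff n) - F.coeff n)
      = v (F.coeff n - σ⁻¹ • F.coeff n) := by
        rw [AlgEquiv.smul_def, ← hinv σ⁻¹, _root_.map_sub, ← AlgEquiv.mul_apply, inv_mul_cancel,
          AlgEquiv.one_apply]
    _ ≤ _ := hn

end GeneratesIntegers

end AddValuation

theorem iG_quotient_eq_sum_general
    (K L : Type) [Field K] [Field L] [Algebra K L]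
    [Fintype (L ≃ₐ[K] L)]
    (w : AddValuation L (WithTop (ℤ ×ₗ ℤ)))
    (hinvar : ∀ (σ : L ≃ₐ[K] L) (x : L), w (σ x) = w x)
    (a : L) (ha : 0 ≤ w a)
    (hmono : ∀ x : L, 0 ≤ w x → ∃ q : K[X],
      (∀ i, 0 ≤ w (algebraMap K L (q.coeff i))) ∧ x = Polynomial.aeval a q)
    (iG : (L ≃ₐ[K] L) → WithTop (ℤ ×ₗ ℤ))
    (hiG : ∀ σ : L ≃ₐ[K] L, σ ≠ 1 →
      (∃ x : L, 0 ≤ w x ∧ w (σ x - x) = iG σ) ∧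
      (∀ x : L, 0 ≤ w x → iG σ ≤ w (σ x - x)))
    (H : Subgroup (L ≃ₐ[K] L)) [DecidablePred (· ∈ H)] :
    ∀ σ₀ : L ≃ₐ[K] L, σ₀ ∉ H →
      (∃ y : L, y ∈ IntermediateField.fixedField H ∧ 0 ≤ w y ∧
        w (σ₀ y - y) =
          ∑ σ ∈ Finset.univ.filter (fun σ : L ≃ₐ[K] L => σ₀⁻¹ * σ ∈ H), iG σ) ∧
      (∀ y : L, y ∈ IntermediateField.fixedField H → 0 ≤ w y →
        (∑ σ ∈ Finset.univ.filter (fun σ : L ≃ₐ[K] L => σ₀⁻¹ * σ ∈ H), iG σ) ≤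
          w (σ₀ y - y)) := by
  intro σ₀ hσ₀
  have hgen : w.GeneratesIntegers K a := ⟨ha, hmono⟩
  have hiG_eq (σ : L ≃ₐ[K] L) (hσ : σ ≠ 1) : iG σ = w (σ a - a) := by
    obtain ⟨x, hx, hxσ⟩ := (hiG σ hσ).1
    exact le_antisymm ((hiG σ hσ).2 a ha) (hxσ ▸ hgen.map_sub_le_map_sub hinvar σ hx)
  have hsum : ∑ σ ∈ Finset.univ.filter (fun σ : L ≃ₐ[K] L => σ₀⁻¹ * σ ∈ H), iG σ =
      w ((prodXSubSMulGroup H a).eval (σ₀⁻¹ a)) := by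
    rw [Finset.sum_filter_inv_mul_mem, w.map_eval_prodXSubSMulGroup hinvar]
    refine Finset.sum_congr rfl fun h _ => hiG_eq _ fun h1 => hσ₀ ?_
    simpa [← eq_inv_of_mul_eq_one_left h1] using H.inv_mem h.2
  obtain ⟨c, hc, hc0, hcle⟩ := hgen.exists_mem_fixedField_map_sub_le hinvar H hσ₀
  rw [hsum]
  exact ⟨⟨c, hc, hc0, le_antisymm hcle (hgen.le_map_sub_of_mem_fixedField hinvar H σ₀ hc hc0)⟩,
    fun _ => hgen.le_map_sub_of_mem_fixedField hinvar H σ₀⟩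

/-- Let `V ⊆ W` be a monogenic integral extension of henselian
`ℤ²`-valuation rings with `L/K` Galois of group `G`, let `H ≤ G`, `K' = L^H`, and `V'` the
integral closure of `V` in `K'` (i.e. `V' = W ∩ K'`).  Then for every coset `τ = σ₀H` with
`τ ≠ 1` (i.e. `σ₀ ∉ H`), the minimum `i_{G/H}(τ)` of `{w(τ(y) − y) : y ∈ V'}` exists and
equals `Σ_{σ ↦ τ} i_G(σ)`, the sum over all `σ ∈ G` lying in the coset `σ₀H`. -/
theorem iG_quotient_eq_sum
    (K L : Type) [Field K] [Field L] [Algebra K L] [FiniteDimensional K L] [IsGalois K L]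
    [Fintype (L ≃ₐ[K] L)]
    (w : AddValuation L (WithTop (ℤ ×ₗ ℤ)))
    (hsurj : ∀ γ : ℤ ×ₗ ℤ, ∃ x : L, w x = (γ : WithTop (ℤ ×ₗ ℤ)))
    (hinvar : ∀ (σ : L ≃ₐ[K] L) (x : L), w (σ x) = w x)
    (hK : ∀ (x : K) (γ : ℤ ×ₗ ℤ), w (algebraMap K L x) = (γ : WithTop (ℤ ×ₗ ℤ)) →
      ∃ a b : ℤ, γ = toLex (a, (Nat.card (L ≃ₐ[K] L) : ℤ) * b))
    (hres : ∀ x : L, 0 ≤ w x → ∃ y : K, 0 ≤ w (algebraMap K L y) ∧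
      0 < w (x - algebraMap K L y))
    (VK : Subring K) (hVK : ∀ x : K, x ∈ VK ↔ 0 ≤ w (algebraMap K L x))
    [HenselianLocalRing VK]
    (a : L) (ha : 0 ≤ w a)
    (hmono : ∀ x : L, 0 ≤ w x → ∃ q : K[X],
      (∀ i, 0 ≤ w (algebraMap K L (q.coeff i))) ∧ x = Polynomial.aeval a q)
    (iG : (L ≃ₐ[K] L) → WithTop (ℤ ×ₗ ℤ)) (h1 : iG 1 = ⊤)
    (hiG : ∀ σ : L ≃ₐ[K] L, σ ≠ 1 →
      (∃ x : L, 0 ≤ w x ∧ w (σ x - x) = iG σ) ∧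
      (∀ x : L, 0 ≤ w x → iG σ ≤ w (σ x - x)))
    (H : Subgroup (L ≃ₐ[K] L)) [DecidablePred (· ∈ H)] :
    ∀ σ₀ : L ≃ₐ[K] L, σ₀ ∉ H →
      (∃ y : L, y ∈ IntermediateField.fixedField H ∧ 0 ≤ w y ∧
        w (σ₀ y - y) =
          ∑ σ ∈ Finset.univ.filter (fun σ : L ≃ₐ[K] L => σ₀⁻¹ * σ ∈ H), iG σ) ∧
      (∀ y : L, y ∈ IntermediateField.fixedField H → 0 ≤ w y →
        (∑ σ ∈ Finset.univ.filter (fun σ : L ≃ₐ[K] L => σ₀⁻¹ * σ ∈ H), iG σ) ≤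
          w (σ₀ y - y)) :=
  iG_quotient_eq_sum_general K L w hinvar a ha hmono iG hiG H
end
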